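/- arXiv:2103.04120 — 3 statements merged into one kernel-verified Lean document; each statement's English description precedes it below -/
import Mathlib

section
/- Let T be a topologically mixing, piecewise monotone, continuous map from [0,1] to [0,1]. Then for every γ > 0 there is a positive integer m such that T^m(U) = [0,1] holds for every (nondegenerate) interval U ⊆ [0,1] with |U| ≥ γ. -/
open Set MeasureTheory

/-- `T : [0,1] → [0,1]` is piecewise monotone: there is a finite partition of `[0,1]`
into nondegenerate intervals (given by partition points `0 = a 0 < a 1 < ⋯ < a k = 1`)
such that `T` is monotone on each piece. -/
def PiecewiseMonotone (T : ℝ → ℝ) : Prop :=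
  ∃ (k : ℕ) (a : ℕ → ℝ), 0 < k ∧ a 0 = 0 ∧ a k = 1 ∧
    (∀ i < k, a i < a (i + 1)) ∧
    (∀ i < k, MonotoneOn T (Icc (a i) (a (i + 1))) ∨ AntitoneOn T (Icc (a i) (a (i + 1))))

/-- `T` is topologically mixing as a map of `[0,1]`: for every pair of nonempty
(relatively) open subsets `U`, `V` of `[0,1]` there is `N` such that
`T^n(U) ∩ V ≠ ∅` for all `n ≥ N`. -/
def MixingOnUnitInterval (T : ℝ → ℝ) : Prop :=
  ∀ U V : Set ℝ, IsOpen U → IsOpen V →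
    (U ∩ Icc 0 1).Nonempty → (V ∩ Icc 0 1).Nonempty →
    ∃ N : ℕ, ∀ m : ℕ, N ≤ m → (T^[m] '' (U ∩ Icc 0 1) ∩ (V ∩ Icc 0 1)).Nonempty

lemma chainLem {a : ℕ → ℝ} {k : ℕ} (hlt : ∀ i < k, a i < a (i + 1)) :
    ∀ j ≤ k, ∀ i ≤ j, a i ≤ a j := by
  intro j
  induction j with
  | zero => intro _ i hi; interval_cases i; exact le_rfl
  | succ n ih =>
    intro hk i hi
    rcases Nat.eq_or_lt_of_le hi with h | h
    · rw [h]
    · exact le_trans (ih (by omega) i (by omega)) (hlt n (by omega)).le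

lemma iterCont (T : ℝ → ℝ) (hmaps : MapsTo T (Icc 0 1) (Icc 0 1))
    (hcont : ContinuousOn T (Icc 0 1)) (n : ℕ) : ContinuousOn (T^[n]) (Icc 0 1) := by
  induction n with
  | zero => simpa using continuousOn_id
  | succ n ih =>
    rw [Function.iterate_succ']
    exact hcont.comp ih (hmaps.iterate n)

lemma Lmin (T : ℝ → ℝ) (hmaps : MapsTo T (Icc 0 1) (Icc 0 1))
    (hcont : ContinuousOn T (Icc 0 1)) (hmix : MixingOnUnitInterval T)
    (h : ∀ x ∈ Icc (0:ℝ) 1, 0 < T x) : False := by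
  obtain ⟨x0, hx0, hm⟩ := isCompact_Icc.exists_isMinOn ⟨0, left_mem_Icc.2 zero_le_one⟩ hcont
  have hμ : 0 < T x0 := h x0 hx0
  obtain ⟨N, hN⟩ := hmix (Ioo (-1) 2) (Iio (T x0)) isOpen_Ioo isOpen_Iio
    ⟨0, by norm_num⟩ ⟨0, hμ, by norm_num⟩
  obtain ⟨y, ⟨x, hx, rfl⟩, hy2, _⟩ := hN (N + 1) (by omega)
  have hxI : x ∈ Icc (0:ℝ) 1 := hx.2
  have : T x0 ≤ T^[N+1] x := by
    rw [Function.iterate_succ_apply']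
    exact hm ((hmaps.iterate N) hxI)
  exact absurd hy2 (not_lt.2 this)

lemma Lmax (T : ℝ → ℝ) (hmaps : MapsTo T (Icc 0 1) (Icc 0 1))
    (hcont : ContinuousOn T (Icc 0 1)) (hmix : MixingOnUnitInterval T)
    (h : ∀ x ∈ Icc (0:ℝ) 1, T x < 1) : False := by
  obtain ⟨x0, hx0, hm⟩ := isCompact_Icc.exists_isMaxOn ⟨0, left_mem_Icc.2 zero_le_one⟩ hcont
  have hμ : T x0 < 1 := h x0 hx0
  obtain ⟨N, hN⟩ := hmix (Ioo (-1) 2) (Ioi (T x0)) isOpen_Ioo isOpen_Ioi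
    ⟨0, by norm_num⟩ ⟨1, hμ, by norm_num⟩
  obtain ⟨y, ⟨x, hx, rfl⟩, hy2, _⟩ := hN (N + 1) (by omega)
  have hxI : x ∈ Icc (0:ℝ) 1 := hx.2
  have : T^[N+1] x ≤ T x0 := by
    rw [Function.iterate_succ_apply']
    exact hm ((hmaps.iterate N) hxI)
  exact absurd hy2 (not_lt.2 this)

lemma lemK (S : ℝ → ℝ) (hmaps : MapsTo S (Icc 0 1) (Icc 0 1))
    (hcont : ContinuousOn S (Icc 0 1)) (h0 : S 0 = 0)
    (hpos : ∀ x ∈ Ioc (0:ℝ) 1, 0 < S x)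
    (β : ℝ) (hβ : 0 < β) (hβ1 : β ≤ 1)
    (hm : MonotoneOn S (Icc 0 β))
    (hit : ∀ U V : Set ℝ, IsOpen U → IsOpen V → (U ∩ Icc 0 1).Nonempty →
      (V ∩ Icc 0 1).Nonempty →
      ∃ n, (S^[n] '' (U ∩ Icc 0 1) ∩ (V ∩ Icc 0 1)).Nonempty) :
    False := by
  set b := min β (1/2) with hb
  have hb0 : 0 < b := lt_min hβ (by norm_num)
  have hbβ : b ≤ β := min_le_left _ _
  have hbh : b ≤ 1/2 := min_le_right _ _
  -- expansion near 0
  have hexp : ∀ x ∈ Ioc (0:ℝ) b, x < S x := by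
    intro x hx
    by_contra hle
    push_neg at hle
    have hx1 : x ≤ 1 := hx.2.trans (hbh.trans (by norm_num))
    have hstep : S '' Icc 0 x ⊆ Icc 0 x := by
      rintro _ ⟨z, hz, rfl⟩
      have hzβ : z ∈ Icc (0:ℝ) β := ⟨hz.1, hz.2.trans (hx.2.trans hbβ)⟩
      have hxβ : x ∈ Icc (0:ℝ) β := ⟨hx.1.le, hx.2.trans hbβ⟩
      refine ⟨(hmaps ⟨hz.1, hz.2.trans hx1⟩).1, le_trans (hm hzβ hxβ hz.2) hle⟩
    have hinv : ∀ n, S^[n] '' Icc 0 x ⊆ Icc 0 x := by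
      intro n
      induction n with
      | zero => simp
      | succ n ih =>
        rw [Function.iterate_succ', Set.image_comp]
        exact (Set.image_mono ih).trans hstep
    have hxlt1 : x < 1 := lt_of_le_of_lt hx.2 (hbh.trans_lt (by norm_num))
    obtain ⟨n, y, ⟨⟨z, hz, rfl⟩, hy2, hy3⟩⟩ := hit (Ioo 0 x) (Ioi x) isOpen_Ioo isOpen_Ioi
      ⟨x/2, ⟨by linarith [hx.1], by linarith [hx.1]⟩, ⟨by linarith [hx.1], by linarith⟩⟩
      ⟨1, hxlt1, by norm_num⟩
    have : S^[n] z ∈ Icc 0 x := hinv n ⟨z, ⟨hz.1.1.le, hz.1.2.le⟩, rfl⟩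
    exact absurd hy2 (not_lt.2 this.2)
  -- minimum on [b,1]
  obtain ⟨xm, hxm, hmin⟩ := isCompact_Icc.exists_isMinOn
    (nonempty_Icc.2 (hbh.trans (by norm_num))) (hcont.mono (Icc_subset_Icc hb0.le le_rfl))
  have hμ : 0 < S xm := hpos xm ⟨lt_of_lt_of_le hb0 hxm.1, hxm.2⟩
  set c := min (b/2) (S xm) with hc
  have hc0 : 0 < c := lt_min (by linarith) hμ
  have hbound : ∀ n, ∀ y ∈ S^[n] '' Icc (b/2) 1, c ≤ y := by
    intro n
    induction n with
    | zero =>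
      rintro y hy
      simp only [Function.iterate_zero, Set.image_id] at hy
      exact le_trans (min_le_left _ _) hy.1
    | succ n ih =>
      rintro y hy
      rw [Function.iterate_succ', Set.image_comp] at hy
      obtain ⟨z, hz, rfl⟩ := hy
      have hzc : c ≤ z := ih z hz
      have hzI : z ∈ Icc (0:ℝ) 1 := by
        obtain ⟨w, hw, rfl⟩ := hz
        exact (hmaps.iterate n) ⟨by linarith [hw.1], hw.2⟩
      rcases le_or_gt z b with h | h
      · exact le_trans hzc (hexp z ⟨lt_of_lt_of_le hc0 hzc, h⟩).le
      · exact le_trans (min_le_right _ _) (hmin ⟨h.le, hzI.2⟩)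
  obtain ⟨n, y, ⟨⟨z, hz, rfl⟩, hy2, _⟩⟩ := hit (Ioo (b/2) 1) (Iio c) isOpen_Ioo isOpen_Iio
    ⟨(b/2+1)/2, ⟨by linarith, by linarith⟩, ⟨by linarith, by linarith⟩⟩
    ⟨0, hc0, le_refl (0:ℝ), zero_le_one⟩
  have : c ≤ S^[n] z := hbound n _ ⟨z, ⟨hz.1.1.le, hz.1.2.le⟩, rfl⟩
  exact absurd hy2 (not_lt.2 this)

lemma lemK' (S : ℝ → ℝ) (hmaps : MapsTo S (Icc 0 1) (Icc 0 1))
    (hcont : ContinuousOn S (Icc 0 1))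
    (hneg : ∀ x ∈ Ico (0:ℝ) 1, S x < 1)
    (β : ℝ) (hβ : 0 < β) (hβ1 : β ≤ 1)
    (hm : MonotoneOn S (Icc (1 - β) 1))
    (hit : ∀ U V : Set ℝ, IsOpen U → IsOpen V → (U ∩ Icc 0 1).Nonempty →
      (V ∩ Icc 0 1).Nonempty →
      ∃ n, (S^[n] '' (U ∩ Icc 0 1) ∩ (V ∩ Icc 0 1)).Nonempty) :
    False := by
  set b := min β (1/2) with hb
  have hb0 : 0 < b := lt_min hβ (by norm_num)
  have hbβ : b ≤ β := min_le_left _ _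
  have hbh : b ≤ 1/2 := min_le_right _ _
  -- contraction near 1
  have hexp : ∀ x ∈ Ico (1 - b) (1:ℝ), S x < x := by
    intro x hx
    by_contra hle
    push_neg at hle   -- x ≤ S x
    have hx0 : 0 ≤ x := le_trans (by linarith) hx.1
    have hstep : S '' Icc x 1 ⊆ Icc x 1 := by
      rintro _ ⟨z, hz, rfl⟩
      have hzβ : z ∈ Icc (1 - β) 1 := ⟨le_trans (by linarith [hx.1, hbβ]) hz.1, hz.2⟩
      have hxβ : x ∈ Icc (1 - β) 1 := ⟨by linarith [hx.1], hx.2.le⟩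
      exact ⟨le_trans hle (hm hxβ hzβ hz.1), (hmaps ⟨hx0.trans hz.1, hz.2⟩).2⟩
    have hinv : ∀ n, S^[n] '' Icc x 1 ⊆ Icc x 1 := by
      intro n
      induction n with
      | zero => simp
      | succ n ih =>
        rw [Function.iterate_succ', Set.image_comp]
        exact (Set.image_mono ih).trans hstep
    have hx0' : 0 < x := lt_of_lt_of_le (by linarith) hx.1
    obtain ⟨n, y, ⟨⟨z, hz, rfl⟩, hy2, _⟩⟩ := hit (Ioo x 1) (Iio x) isOpen_Ioo isOpen_Iio
      ⟨(x+1)/2, ⟨by linarith [hx.2], by linarith [hx.2]⟩, ⟨by linarith, by linarith [hx.2]⟩⟩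
      ⟨0, hx0', le_refl (0:ℝ), zero_le_one⟩
    have : S^[n] z ∈ Icc x 1 := hinv n ⟨z, ⟨hz.1.1.le, hz.1.2.le⟩, rfl⟩
    exact absurd hy2 (not_lt.2 this.1)
  -- maximum on [0, 1-b]
  obtain ⟨xm, hxm, hmax⟩ := (isCompact_Icc : IsCompact (Icc (0:ℝ) (1 - b))).exists_isMaxOn
    (nonempty_Icc.2 (by linarith)) (hcont.mono (Icc_subset_Icc le_rfl (by linarith)))
  have hμ : S xm < 1 := hneg xm ⟨hxm.1, lt_of_le_of_lt hxm.2 (by linarith)⟩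
  set c := max (1 - b/2) (S xm) with hc
  have hc1 : c < 1 := max_lt (by linarith) hμ
  have hbound : ∀ n, ∀ y ∈ S^[n] '' Icc 0 (1 - b/2), y ≤ c := by
    intro n
    induction n with
    | zero =>
      rintro y hy
      simp only [Function.iterate_zero, Set.image_id] at hy
      exact le_trans hy.2 (le_max_left _ _)
    | succ n ih =>
      rintro y hy
      rw [Function.iterate_succ', Set.image_comp] at hy
      obtain ⟨z, hz, rfl⟩ := hy
      have hzc : z ≤ c := ih z hz
      have hzI : z ∈ Icc (0:ℝ) 1 := by
        obtain ⟨w, hw, rfl⟩ := hz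
        exact (hmaps.iterate n) ⟨hw.1, by linarith [hw.2]⟩
      rcases le_or_gt z (1 - b) with h | h
      · exact le_trans (hmax ⟨hzI.1, h⟩) (le_max_right _ _)
      · exact le_trans (hexp z ⟨h.le, lt_of_le_of_lt hzc hc1⟩).le hzc
  obtain ⟨n, y, ⟨⟨z, hz, rfl⟩, hy2, _⟩⟩ := hit (Ioo 0 (1 - b/2)) (Ioi c) isOpen_Ioo isOpen_Ioi
    ⟨(1-b/2)/2, ⟨by linarith, by linarith⟩, ⟨by linarith, by linarith⟩⟩
    ⟨1, hc1, zero_le_one, le_refl (1:ℝ)⟩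
  have : S^[n] z ≤ c := hbound n _ ⟨z, ⟨hz.1.1.le, hz.1.2.le⟩, rfl⟩
  exact absurd hy2 (not_lt.2 this)

lemma lemA (T : ℝ → ℝ) (hmaps : MapsTo T (Icc 0 1) (Icc 0 1))
    (hcont : ContinuousOn T (Icc 0 1)) (hpm : PiecewiseMonotone T)
    (hmix : MixingOnUnitInterval T)
    (hA : ∀ m, 1 ≤ m → ∀ p ∈ Ioo (0:ℝ) 1, T^[m] p ≠ 0) : False := by
  have hA1 : ∀ p ∈ Ioo (0:ℝ) 1, T p ≠ 0 := fun p hp => by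
    simpa using hA 1 le_rfl p hp
  have hA2 : ∀ p ∈ Ioo (0:ℝ) 1, T (T p) ≠ 0 := fun p hp => by
    have h := hA 2 (by omega) p hp
    rwa [show T^[2] p = T (T p) by rw [Function.iterate_succ_apply', Function.iterate_one]] at h
  obtain ⟨k, a, hk, ha0, hak, hlt, hmono⟩ := hpm
  have hchain := chainLem hlt
  have ha1pos : 0 < a 1 := by rw [← ha0]; exact hlt 0 hk
  have ha1le : a 1 ≤ 1 := by rw [← hak]; exact hchain k le_rfl 1 hk
  have hitT : ∀ U V : Set ℝ, IsOpen U → IsOpen V → (U ∩ Icc 0 1).Nonempty →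
      (V ∩ Icc 0 1).Nonempty →
      ∃ n, (T^[n] '' (U ∩ Icc 0 1) ∩ (V ∩ Icc 0 1)).Nonempty := by
    intro U V hU hV hUn hVn
    obtain ⟨N, hN⟩ := hmix U V hU hV hUn hVn
    exact ⟨N, hN N le_rfl⟩
  by_cases h00 : T 0 = 0
  · by_cases h10 : T 1 = 0
    · refine Lmax T hmaps hcont hmix ?_
      intro x hx
      rcases eq_or_lt_of_le hx.1 with h0x | h0x
      · rw [← h0x, h00]; norm_num
      rcases eq_or_lt_of_le hx.2 with hx1 | hx1
      · rw [hx1, h10]; norm_num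
      refine lt_of_le_of_ne (hmaps hx).2 ?_
      intro h1
      exact hA2 x ⟨h0x, hx1⟩ (by rw [h1, h10])
    · have hpos : ∀ x ∈ Ioc (0:ℝ) 1, 0 < T x := by
        intro x hx
        rcases eq_or_lt_of_le hx.2 with hx1 | hx1
        · refine lt_of_le_of_ne (hmaps ⟨hx.1.le, hx.2⟩).1 ?_
          rw [hx1]; exact Ne.symm h10
        · exact lt_of_le_of_ne (hmaps ⟨hx.1.le, hx.2⟩).1 (Ne.symm (hA1 x ⟨hx.1, hx1⟩))
      rcases hmono 0 hk with hM | hAnt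
      · rw [ha0] at hM
        exact lemK T hmaps hcont h00 hpos (a 1) ha1pos ha1le hM hitT
      · rw [ha0] at hAnt
        have hmem : a 1 / 2 ∈ Icc 0 (a 1) := ⟨by linarith, by linarith⟩
        have h1 : T (a 1 / 2) ≤ T 0 := hAnt (left_mem_Icc.2 (by linarith)) hmem (by linarith)
        have h2 : 0 ≤ T (a 1 / 2) := (hmaps ⟨by linarith, by linarith⟩).1
        refine hA1 (a 1 / 2) ⟨by linarith, by linarith⟩ (le_antisymm ?_ h2)
        rw [h00] at h1; exact h1
  · have h10 : T 1 = 0 := by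
      by_contra h10
      refine Lmin T hmaps hcont hmix ?_
      intro x hx
      rcases eq_or_lt_of_le hx.1 with h0x | h0x
      · rw [← h0x]
        exact lt_of_le_of_ne (hmaps (left_mem_Icc.2 zero_le_one)).1 (Ne.symm h00)
      rcases eq_or_lt_of_le hx.2 with hx1 | hx1
      · rw [hx1]
        exact lt_of_le_of_ne (hmaps (right_mem_Icc.2 zero_le_one)).1 (Ne.symm h10)
      · exact lt_of_le_of_ne (hmaps hx).1 (Ne.symm (hA1 x ⟨h0x, hx1⟩))
    by_cases h01 : T 0 = 1
    · -- swap case : work with S = T ∘ T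
      have hantiF : AntitoneOn T (Icc 0 (a 1)) := by
        rcases hmono 0 hk with hM | hAnt
        · exfalso
          rw [ha0] at hM
          have hmem : a 1 / 2 ∈ Icc 0 (a 1) := ⟨by linarith, by linarith⟩
          have h1 : T 0 ≤ T (a 1 / 2) := hM (left_mem_Icc.2 (by linarith)) hmem (by linarith)
          have h2 : T (a 1 / 2) ≤ 1 := (hmaps ⟨by linarith, by linarith⟩).2
          have h3 : T (a 1 / 2) = 1 := le_antisymm h2 (by rw [← h01]; exact h1)
          exact hA2 (a 1 / 2) ⟨by linarith, by linarith⟩ (by rw [h3, h10])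
        · rwa [ha0] at hAnt
      have hkm : a (k - 1) < 1 := by
        have h := hlt (k - 1) (by omega)
        rwa [show k - 1 + 1 = k by omega, hak] at h
      have hkm0 : 0 ≤ a (k - 1) := by
        rw [← ha0]; exact hchain (k - 1) (by omega) 0 (by omega)
      have hantiL : AntitoneOn T (Icc (a (k - 1)) 1) := by
        have h := hmono (k - 1) (by omega)
        rw [show k - 1 + 1 = k by omega, hak] at h
        rcases h with hM | hAnt
        · exfalso
          have hmem : (a (k - 1) + 1) / 2 ∈ Icc (a (k - 1)) 1 := ⟨by linarith, by linarith⟩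
          have h1 : T ((a (k - 1) + 1) / 2) ≤ T 1 :=
            hM hmem (right_mem_Icc.2 (by linarith)) (by linarith)
          have h2 : 0 ≤ T ((a (k - 1) + 1) / 2) := (hmaps ⟨by linarith, by linarith⟩).1
          refine hA1 ((a (k - 1) + 1) / 2) ⟨by linarith, by linarith⟩ (le_antisymm ?_ h2)
          rwa [h10] at h1
        · exact hAnt
      have hcw : ContinuousWithinAt T (Icc 0 1) 0 := hcont 0 (left_mem_Icc.2 zero_le_one)
      have hev : T ⁻¹' (Ioi (a (k - 1))) ∈ nhdsWithin 0 (Icc (0:ℝ) 1) :=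
        hcw (Ioi_mem_nhds (by rw [h01]; exact hkm))
      rw [Metric.mem_nhdsWithin_iff] at hev
      obtain ⟨ε, hε, hball⟩ := hev
      set β := min (ε / 2) (a 1) with hβd
      have hβ0 : 0 < β := lt_min (by linarith) ha1pos
      have hβa1 : β ≤ a 1 := min_le_right _ _
      have hβ1 : β ≤ 1 := hβa1.trans ha1le
      have hTlow : ∀ x ∈ Icc (0:ℝ) β, T x ∈ Icc (a (k - 1)) 1 := by
        intro x hx
        have hxε : x ∈ Metric.ball (0:ℝ) ε ∩ Icc 0 1 := by
          constructor
          · rw [Metric.mem_ball, Real.dist_eq, sub_zero, abs_of_nonneg hx.1]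
            have := hx.2
            have h2 : β ≤ ε / 2 := min_le_left _ _
            linarith
          · exact ⟨hx.1, hx.2.trans hβ1⟩
        exact ⟨(hball hxε).le, (hmaps ⟨hx.1, hx.2.trans hβ1⟩).2⟩
      have hSmono : MonotoneOn (T ∘ T) (Icc 0 β) := by
        intro x hx y hy hxy
        have h1 : T y ≤ T x := hantiF ⟨hx.1, hx.2.trans hβa1⟩ ⟨hy.1, hy.2.trans hβa1⟩ hxy
        exact hantiL (hTlow y hy) (hTlow x hx) h1
      have hSmaps : MapsTo (T ∘ T) (Icc 0 1) (Icc 0 1) := hmaps.comp hmaps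
      have hScont : ContinuousOn (T ∘ T) (Icc 0 1) := hcont.comp hcont hmaps
      have hS0 : (T ∘ T) 0 = 0 := by simp only [Function.comp_apply, h01, h10]
      have hSpos : ∀ x ∈ Ioc (0:ℝ) 1, 0 < (T ∘ T) x := by
        intro x hx
        rcases eq_or_lt_of_le hx.2 with hx1 | hx1
        · rw [hx1]; simp only [Function.comp_apply, h10, h01]; norm_num
        · have hne := hA2 x ⟨hx.1, hx1⟩
          have hge : 0 ≤ T (T x) := (hmaps (hmaps ⟨hx.1.le, hx.2⟩)).1
          exact lt_of_le_of_ne hge (Ne.symm hne)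
      have hitS : ∀ U V : Set ℝ, IsOpen U → IsOpen V → (U ∩ Icc 0 1).Nonempty →
          (V ∩ Icc 0 1).Nonempty →
          ∃ n, ((T ∘ T)^[n] '' (U ∩ Icc 0 1) ∩ (V ∩ Icc 0 1)).Nonempty := by
        intro U V hU hV hUn hVn
        obtain ⟨N, hN⟩ := hmix U V hU hV hUn hVn
        refine ⟨N, ?_⟩
        have h2N := hN (2 * N) (by omega)
        have hT2 : T^[2] = T ∘ T := by
          funext x
          rw [Function.iterate_succ_apply', Function.iterate_one, Function.comp_apply]
        rwa [show T^[2 * N] = (T ∘ T)^[N] by rw [Function.iterate_mul, hT2]] at h2N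
      exact lemK (T ∘ T) hSmaps hScont hS0 hSpos β hβ0 hβ1 hSmono hitS
    · refine Lmax T hmaps hcont hmix ?_
      intro x hx
      rcases eq_or_lt_of_le hx.1 with h0x | h0x
      · rw [← h0x]
        exact lt_of_le_of_ne (hmaps (left_mem_Icc.2 zero_le_one)).2 h01
      rcases eq_or_lt_of_le hx.2 with hx1 | hx1
      · rw [hx1, h10]; norm_num
      · refine lt_of_le_of_ne (hmaps hx).2 ?_
        intro h1
        exact hA2 x ⟨h0x, hx1⟩ (by rw [h1, h10])

lemma lemA' (T : ℝ → ℝ) (hmaps : MapsTo T (Icc 0 1) (Icc 0 1))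
    (hcont : ContinuousOn T (Icc 0 1)) (hpm : PiecewiseMonotone T)
    (hmix : MixingOnUnitInterval T)
    (hA : ∀ m, 1 ≤ m → ∀ p ∈ Ioo (0:ℝ) 1, T^[m] p ≠ 1) : False := by
  have hA1 : ∀ p ∈ Ioo (0:ℝ) 1, T p ≠ 1 := fun p hp => by
    simpa using hA 1 le_rfl p hp
  have hA2 : ∀ p ∈ Ioo (0:ℝ) 1, T (T p) ≠ 1 := fun p hp => by
    have h := hA 2 (by omega) p hp
    rwa [show T^[2] p = T (T p) by rw [Function.iterate_succ_apply', Function.iterate_one]] at h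
  obtain ⟨k, a, hk, ha0, hak, hlt, hmono⟩ := hpm
  have hchain := chainLem hlt
  have ha1pos : 0 < a 1 := by rw [← ha0]; exact hlt 0 hk
  have ha1le : a 1 ≤ 1 := by rw [← hak]; exact hchain k le_rfl 1 hk
  have hkm : a (k - 1) < 1 := by
    have h := hlt (k - 1) (by omega)
    rwa [show k - 1 + 1 = k by omega, hak] at h
  have hkm0 : 0 ≤ a (k - 1) := by
    rw [← ha0]; exact hchain (k - 1) (by omega) 0 (by omega)
  have hitT : ∀ U V : Set ℝ, IsOpen U → IsOpen V → (U ∩ Icc 0 1).Nonempty →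
      (V ∩ Icc 0 1).Nonempty →
      ∃ n, (T^[n] '' (U ∩ Icc 0 1) ∩ (V ∩ Icc 0 1)).Nonempty := by
    intro U V hU hV hUn hVn
    obtain ⟨N, hN⟩ := hmix U V hU hV hUn hVn
    exact ⟨N, hN N le_rfl⟩
  by_cases h11 : T 1 = 1
  · by_cases h01 : T 0 = 1
    · refine Lmin T hmaps hcont hmix ?_
      intro x hx
      rcases eq_or_lt_of_le hx.1 with h0x | h0x
      · rw [← h0x, h01]; norm_num
      rcases eq_or_lt_of_le hx.2 with hx1 | hx1
      · rw [hx1, h11]; norm_num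
      refine lt_of_le_of_ne (hmaps hx).1 ?_
      intro h
      exact hA2 x ⟨h0x, hx1⟩ (by rw [← h, h01])
    · have hneg : ∀ x ∈ Ico (0:ℝ) 1, T x < 1 := by
        intro x hx
        rcases eq_or_lt_of_le hx.1 with h0x | h0x
        · rw [← h0x]
          exact lt_of_le_of_ne (hmaps (left_mem_Icc.2 zero_le_one)).2 h01
        · exact lt_of_le_of_ne (hmaps ⟨hx.1, hx.2.le⟩).2 (hA1 x ⟨h0x, hx.2⟩)
      have h := hmono (k - 1) (by omega)
      rw [show k - 1 + 1 = k by omega, hak] at h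
      rcases h with hM | hAnt
      · refine lemK' T hmaps hcont hneg (1 - a (k - 1)) (by linarith) (by linarith) ?_ hitT
        rwa [show (1:ℝ) - (1 - a (k - 1)) = a (k - 1) by ring]
      · exfalso
        have hmem : (a (k - 1) + 1) / 2 ∈ Icc (a (k - 1)) 1 := ⟨by linarith, by linarith⟩
        have h1 : T 1 ≤ T ((a (k - 1) + 1) / 2) :=
          hAnt hmem (right_mem_Icc.2 (by linarith)) (by linarith)
        have h2 : T ((a (k - 1) + 1) / 2) ≤ 1 := (hmaps ⟨by linarith, by linarith⟩).2
        refine hA1 ((a (k - 1) + 1) / 2) ⟨by linarith, by linarith⟩ (le_antisymm h2 ?_)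
        rwa [h11] at h1
  · have h01 : T 0 = 1 := by
      by_contra h01
      refine Lmax T hmaps hcont hmix ?_
      intro x hx
      rcases eq_or_lt_of_le hx.1 with h0x | h0x
      · rw [← h0x]
        exact lt_of_le_of_ne (hmaps (left_mem_Icc.2 zero_le_one)).2 h01
      rcases eq_or_lt_of_le hx.2 with hx1 | hx1
      · rw [hx1]
        exact lt_of_le_of_ne (hmaps (right_mem_Icc.2 zero_le_one)).2 h11
      · exact lt_of_le_of_ne (hmaps hx).2 (hA1 x ⟨h0x, hx1⟩)
    by_cases h10 : T 1 = 0
    · -- swap case : S = T ∘ T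
      have hantiF : AntitoneOn T (Icc 0 (a 1)) := by
        rcases hmono 0 hk with hM | hAnt
        · exfalso
          rw [ha0] at hM
          have hmem : a 1 / 2 ∈ Icc 0 (a 1) := ⟨by linarith, by linarith⟩
          have h1 : T 0 ≤ T (a 1 / 2) := hM (left_mem_Icc.2 (by linarith)) hmem (by linarith)
          have h2 : T (a 1 / 2) ≤ 1 := (hmaps ⟨by linarith, by linarith⟩).2
          refine hA1 (a 1 / 2) ⟨by linarith, by linarith⟩ (le_antisymm h2 ?_)
          rwa [h01] at h1
        · rwa [ha0] at hAnt
      have hantiL : AntitoneOn T (Icc (a (k - 1)) 1) := by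
        have h := hmono (k - 1) (by omega)
        rw [show k - 1 + 1 = k by omega, hak] at h
        rcases h with hM | hAnt
        · exfalso
          have hmem : (a (k - 1) + 1) / 2 ∈ Icc (a (k - 1)) 1 := ⟨by linarith, by linarith⟩
          have h1 : T ((a (k - 1) + 1) / 2) ≤ T 1 :=
            hM hmem (right_mem_Icc.2 (by linarith)) (by linarith)
          have h2 : 0 ≤ T ((a (k - 1) + 1) / 2) := (hmaps ⟨by linarith, by linarith⟩).1
          have h3 : T ((a (k - 1) + 1) / 2) = 0 := le_antisymm (by rwa [h10] at h1) h2
          exact hA2 ((a (k - 1) + 1) / 2) ⟨by linarith, by linarith⟩ (by rw [h3, h01])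
        · exact hAnt
      have hcw : ContinuousWithinAt T (Icc 0 1) 1 := hcont 1 (right_mem_Icc.2 zero_le_one)
      have hev : T ⁻¹' (Iio (a 1)) ∈ nhdsWithin 1 (Icc (0:ℝ) 1) :=
        hcw (Iio_mem_nhds (by rw [h10]; exact ha1pos))
      rw [Metric.mem_nhdsWithin_iff] at hev
      obtain ⟨ε, hε, hball⟩ := hev
      set β := min (ε / 2) (1 - a (k - 1)) with hβd
      have hβ0 : 0 < β := lt_min (by linarith) (by linarith)
      have hβa : β ≤ 1 - a (k - 1) := min_le_right _ _
      have hβ1 : β ≤ 1 := hβa.trans (by linarith)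
      have hThigh : ∀ x ∈ Icc (1 - β) 1, T x ∈ Icc (0:ℝ) (a 1) := by
        intro x hx
        have hxI : x ∈ Icc (0:ℝ) 1 := ⟨by linarith [hx.1], hx.2⟩
        have hxε : x ∈ Metric.ball (1:ℝ) ε ∩ Icc 0 1 := by
          constructor
          · rw [Metric.mem_ball, Real.dist_eq, abs_of_nonpos (by linarith [hx.2])]
            have h2 : β ≤ ε / 2 := min_le_left _ _
            have := hx.1
            linarith
          · exact hxI
        exact ⟨(hmaps hxI).1, (hball hxε).le⟩
      have hSmono : MonotoneOn (T ∘ T) (Icc (1 - β) 1) := by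
        intro x hx y hy hxy
        have hxL : x ∈ Icc (a (k - 1)) 1 := ⟨by linarith [hx.1], hx.2⟩
        have hyL : y ∈ Icc (a (k - 1)) 1 := ⟨by linarith [hy.1], hy.2⟩
        have h1 : T y ≤ T x := hantiL hxL hyL hxy
        exact hantiF (hThigh y hy) (hThigh x hx) h1
      have hSmaps : MapsTo (T ∘ T) (Icc 0 1) (Icc 0 1) := hmaps.comp hmaps
      have hScont : ContinuousOn (T ∘ T) (Icc 0 1) := hcont.comp hcont hmaps
      have hSneg : ∀ x ∈ Ico (0:ℝ) 1, (T ∘ T) x < 1 := by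
        intro x hx
        rcases eq_or_lt_of_le hx.1 with h0x | h0x
        · rw [← h0x]; simp only [Function.comp_apply, h01, h10]; norm_num
        · have hne := hA2 x ⟨h0x, hx.2⟩
          have hle : T (T x) ≤ 1 := (hmaps (hmaps ⟨hx.1, hx.2.le⟩)).2
          exact lt_of_le_of_ne hle hne
      have hitS : ∀ U V : Set ℝ, IsOpen U → IsOpen V → (U ∩ Icc 0 1).Nonempty →
          (V ∩ Icc 0 1).Nonempty →
          ∃ n, ((T ∘ T)^[n] '' (U ∩ Icc 0 1) ∩ (V ∩ Icc 0 1)).Nonempty := by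
        intro U V hU hV hUn hVn
        obtain ⟨N, hN⟩ := hmix U V hU hV hUn hVn
        refine ⟨N, ?_⟩
        have h2N := hN (2 * N) (by omega)
        have hT2 : T^[2] = T ∘ T := by
          funext x
          rw [Function.iterate_succ_apply', Function.iterate_one, Function.comp_apply]
        rwa [show T^[2 * N] = (T ∘ T)^[N] by rw [Function.iterate_mul, hT2]] at h2N
      exact lemK' (T ∘ T) hSmaps hScont hSneg β hβ0 hβ1 hSmono hitS
    · refine Lmin T hmaps hcont hmix ?_
      intro x hx
      rcases eq_or_lt_of_le hx.1 with h0x | h0x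
      · rw [← h0x, h01]; norm_num
      rcases eq_or_lt_of_le hx.2 with hx1 | hx1
      · rw [hx1]
        exact lt_of_le_of_ne (hmaps (right_mem_Icc.2 zero_le_one)).1 (Ne.symm h10)
      · refine lt_of_le_of_ne (hmaps hx).1 ?_
        intro h
        exact hA2 x ⟨h0x, hx1⟩ (by rw [← h, h01])

/-- Let `T` be a topologically mixing, piecewise monotone, continuous map from `[0,1]`
to `[0,1]`. Then for every `γ > 0` there is a positive integer `m` such that
`T^m(U) = [0,1]` holds for every nondegenerate interval `U ⊆ [0,1]` with `|U| ≥ γ`. -/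
theorem stmt_0 (T : ℝ → ℝ)
    (hmaps : MapsTo T (Icc 0 1) (Icc 0 1))
    (hcont : ContinuousOn T (Icc 0 1))
    (hpm : PiecewiseMonotone T)
    (hmix : MixingOnUnitInterval T) :
    ∀ γ : ℝ, 0 < γ → ∃ m : ℕ, 0 < m ∧
      ∀ U : Set ℝ, U ⊆ Icc 0 1 → U.OrdConnected → U.Nontrivial →
        ENNReal.ofReal γ ≤ volume U → T^[m] '' U = Icc 0 1 := by
  intro γ hγ
  have hE0 : ∃ m, 1 ≤ m ∧ ∃ p ∈ Ioo (0:ℝ) 1, T^[m] p = 0 := by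
    by_contra h
    push_neg at h
    exact lemA T hmaps hcont hpm hmix fun m hm p hp => h m hm p hp
  have hE1 : ∃ m, 1 ≤ m ∧ ∃ p ∈ Ioo (0:ℝ) 1, T^[m] p = 1 := by
    by_contra h
    push_neg at h
    exact lemA' T hmaps hcont hpm hmix fun m hm p hp => h m hm p hp
  obtain ⟨mp, hmp1, p, hp, hTp⟩ := hE0
  obtain ⟨mq, hmq1, q, hq, hTq⟩ := hE1
  set mm := max mp mq with hmmd
  have hmm1 : mp ≤ mm := le_max_left _ _
  have hmm2 : mq ≤ mm := le_max_right _ _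
  set g := min γ 1 with hgd
  have hg0 : 0 < g := lt_min hγ one_pos
  have hg1 : g ≤ 1 := min_le_right _ _
  set l := min p q with hld
  set r := max p q with hrd
  have hl0 : 0 < l := lt_min hp.1 hq.1
  have hr1 : r < 1 := max_lt hp.2 hq.2
  have hVl : ((Iio l) ∩ Icc (0:ℝ) 1).Nonempty := ⟨0, hl0, le_refl (0:ℝ), zero_le_one⟩
  have hVr : ((Ioi r) ∩ Icc (0:ℝ) 1).Nonempty := ⟨1, hr1, zero_le_one, le_refl (1:ℝ)⟩
  have key : ∀ j : ℕ, ∃ N : ℕ, ∀ n, N ≤ n →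
      ((Ioo ((j:ℝ)*(g/4)) ((j:ℝ)*(g/4)+g/2)) ∩ Icc (0:ℝ) 1).Nonempty →
      (T^[n] '' ((Ioo ((j:ℝ)*(g/4)) ((j:ℝ)*(g/4)+g/2)) ∩ Icc 0 1) ∩ ((Iio l) ∩ Icc 0 1)).Nonempty ∧
      (T^[n] '' ((Ioo ((j:ℝ)*(g/4)) ((j:ℝ)*(g/4)+g/2)) ∩ Icc 0 1) ∩ ((Ioi r) ∩ Icc 0 1)).Nonempty := by
    intro j
    by_cases hne : ((Ioo ((j:ℝ)*(g/4)) ((j:ℝ)*(g/4)+g/2)) ∩ Icc (0:ℝ) 1).Nonempty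
    · obtain ⟨N1, hN1⟩ := hmix _ _ isOpen_Ioo isOpen_Iio hne hVl
      obtain ⟨N2, hN2⟩ := hmix _ _ isOpen_Ioo isOpen_Ioi hne hVr
      exact ⟨max N1 N2, fun n hn _ =>
        ⟨hN1 n (le_trans (le_max_left _ _) hn), hN2 n (le_trans (le_max_right _ _) hn)⟩⟩
    · exact ⟨0, fun n _ h => absurd h hne⟩
  choose F hF using key
  set M := Nat.ceil (4 / g) + 1 with hMd
  set Nm := (Finset.range M).sup F with hNd
  refine ⟨Nm + mm, by omega, ?_⟩
  intro U hUsub hUconn hUnt hUvol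
  obtain ⟨u, hu, v, hv, huv⟩ := hUnt
  set A := sInf U with hAd
  set B := sSup U with hBd
  have hUne : U.Nonempty := ⟨u, hu⟩
  have hbddA : BddAbove U := ⟨1, fun x hx => (hUsub hx).2⟩
  have hbddB : BddBelow U := ⟨0, fun x hx => (hUsub hx).1⟩
  have hA0 : 0 ≤ A := le_csInf hUne (fun x hx => (hUsub hx).1)
  have hB1 : B ≤ 1 := csSup_le hUne (fun x hx => (hUsub hx).2)
  have hIoo : Ioo A B ⊆ U := by
    intro x hx
    obtain ⟨w1, hw1, hw1x⟩ := (csInf_lt_iff hbddB hUne).1 hx.1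
    obtain ⟨w2, hw2, hxw2⟩ := (lt_csSup_iff hbddA hUne).1 hx.2
    exact hUconn.out hw1 hw2 ⟨hw1x.le, hxw2.le⟩
  have hUIcc : U ⊆ Icc A B := fun x hx => ⟨csInf_le hbddB hx, le_csSup hbddA hx⟩
  have hgBA : g ≤ B - A := by
    have h1 : ENNReal.ofReal g ≤ volume U :=
      le_trans (ENNReal.ofReal_le_ofReal (min_le_left _ _)) hUvol
    have h2 : volume U ≤ ENNReal.ofReal (B - A) := by
      calc volume U ≤ volume (Icc A B) := measure_mono hUIcc
        _ = ENNReal.ofReal (B - A) := Real.volume_Icc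
    by_contra hc
    push_neg at hc
    have h3 : ENNReal.ofReal (B - A) < ENNReal.ofReal g :=
      (ENNReal.ofReal_lt_ofReal_iff hg0).2 hc
    exact absurd (le_trans h1 h2) (not_le.2 h3)
  have hAB : A + g ≤ B := by linarith
  have hA1 : A ≤ 1 := by linarith
  set j := Nat.ceil (A / (g / 4)) with hjd
  have hg4 : 0 < g / 4 := by linarith
  have hjA : A ≤ (j:ℝ) * (g/4) := by
    have h1 := Nat.le_ceil (A / (g/4))
    calc A = (A / (g/4)) * (g/4) := by field_simp
      _ ≤ (j:ℝ) * (g/4) := mul_le_mul_of_nonneg_right h1 (by linarith)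
  have hjA' : (j:ℝ) * (g/4) < A + g/4 := by
    have h1 : ((j:ℝ)) < A / (g/4) + 1 := Nat.ceil_lt_add_one (by positivity)
    calc (j:ℝ) * (g/4) < (A/(g/4) + 1) * (g/4) := mul_lt_mul_of_pos_right h1 hg4
      _ = A + g/4 := by field_simp
  have hjM : j < M := by
    have h14 : A / (g/4) ≤ 4 / g := by
      rw [show (4:ℝ)/g = 1/(g/4) by field_simp]
      gcongr
    have h15 : j ≤ Nat.ceil (4 / g) := Nat.ceil_le_ceil h14
    omega
  set W := Ioo ((j:ℝ)*(g/4)) ((j:ℝ)*(g/4)+g/2) with hWd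
  have hWsubU : W ⊆ U := by
    intro x hx
    apply hIoo
    refine ⟨lt_of_le_of_lt hjA hx.1, ?_⟩
    have h1 : x < A + 3*(g/4) := by linarith [hx.2, hjA']
    linarith
  have hWne : (W ∩ Icc (0:ℝ) 1).Nonempty := by
    have hmem : (j:ℝ)*(g/4) + g/4 ∈ W := ⟨by linarith, by linarith⟩
    exact ⟨(j:ℝ)*(g/4) + g/4, hmem, hUsub (hWsubU hmem)⟩
  have hjR : j ∈ Finset.range M := Finset.mem_range.2 hjM
  have hFN : F j ≤ Nm := Finset.le_sup hjR
  set np := Nm + (mm - mp) with hnpd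
  set nq := Nm + (mm - mq) with hnqd
  have hmp_eq : mp + np = Nm + mm := by omega
  have hmq_eq : mq + nq = Nm + mm := by omega
  have hpre : IsPreconnected U := hUconn.isPreconnected
  have hconn : ∀ n : ℕ, (T^[n] '' U).OrdConnected := fun n =>
    (hpre.image _ ((iterCont T hmaps hcont n).mono hUsub)).ordConnected
  have himg : ∀ n : ℕ, F j ≤ n → ∀ x ∈ Icc l r, x ∈ T^[n] '' U := by
    intro n hn x hx
    obtain ⟨hL, hR⟩ := hF j n hn hWne
    obtain ⟨y, ⟨z, hz, rfl⟩, hyl, _⟩ := hL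
    obtain ⟨y', ⟨z', hz', rfl⟩, hyr, _⟩ := hR
    have hyU : T^[n] z ∈ T^[n] '' U := ⟨z, hWsubU hz.1, rfl⟩
    have hy'U : T^[n] z' ∈ T^[n] '' U := ⟨z', hWsubU hz'.1, rfl⟩
    exact (hconn n).out hyU hy'U ⟨le_trans hyl.le hx.1, le_trans hx.2 hyr.le⟩
  have h0mem : (0:ℝ) ∈ T^[Nm + mm] '' U := by
    obtain ⟨z, hz, hz2⟩ := himg np (by omega) p ⟨min_le_left _ _, le_max_left _ _⟩
    refine ⟨z, hz, ?_⟩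
    rw [← hmp_eq, Function.iterate_add_apply, hz2, hTp]
  have h1mem : (1:ℝ) ∈ T^[Nm + mm] '' U := by
    obtain ⟨z, hz, hz2⟩ := himg nq (by omega) q ⟨min_le_right _ _, le_max_right _ _⟩
    refine ⟨z, hz, ?_⟩
    rw [← hmq_eq, Function.iterate_add_apply, hz2, hTq]
  apply subset_antisymm
  · rintro y ⟨x, hx, rfl⟩
    exact (hmaps.iterate _) (hUsub hx)
  · intro x hx
    exact (hconn _).out h0mem h1mem ⟨hx.1, hx.2⟩
end

section
/- Let T_1, T_2, …, T_n be finitely many expanding, piecewise monotone, continuous maps from [0,1] to [0,1]. Then for every ε > 0 there is γ > 0 such that for every sequence (f_i)_{i=0}^∞ with each f_i ∈ {T_1, …, T_n}, and for every interval U ⊆ [0,1] with |U| ≥ ε, one has |f_0^i(U)| ≥ γ for all i ≥ 0 (i.e., inf_{i≥0} |f_0^i(U)| ≥ γ). -/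
open Set MeasureTheory

/-- `T : [0,1] → [0,1]` is piecewise monotone and expanding: there is a finite partition
of `[0,1]` into nondegenerate intervals (partition points `0 = a 0 < ⋯ < a k = 1`) and an
expansion rate `α > 1` such that on each piece `T` is monotone and
`|T x - T y| ≥ α * |x - y|`. -/
def PiecewiseMonotoneExpanding (T : ℝ → ℝ) : Prop :=
  ∃ (k : ℕ) (a : ℕ → ℝ) (α : ℝ), 1 < α ∧ 0 < k ∧ a 0 = 0 ∧ a k = 1 ∧
    (∀ i < k, a i < a (i + 1)) ∧
    (∀ i < k,
      (MonotoneOn T (Icc (a i) (a (i + 1))) ∨ AntitoneOn T (Icc (a i) (a (i + 1)))) ∧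
      ∀ x ∈ Icc (a i) (a (i + 1)), ∀ y ∈ Icc (a i) (a (i + 1)),
        α * |x - y| ≤ |T x - T y|)

/-- `compSeq f i = f_0^i = f_{i-1} ∘ ⋯ ∘ f_1 ∘ f_0`, with `compSeq f 0 = id`. -/
def compSeq (f : ℕ → ℝ → ℝ) : ℕ → ℝ → ℝ
  | 0 => id
  | i + 1 => f i ∘ compSeq f i

/-- If the open interval `(x,y) ⊆ [0,1]` avoids all partition points, then `[x,y]` is
contained in one closed piece. -/
lemma exists_piece (k : ℕ) (a : ℕ → ℝ) (h0 : a 0 = 0) (h1 : a k = 1)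
    (x y : ℝ) (hx : 0 ≤ x) (hxy : x < y) (hy : y ≤ 1)
    (havoid : ∀ i ≤ k, a i ∉ Ioo x y) :
    ∃ l < k, a l ≤ x ∧ y ≤ a (l + 1) := by
  classical
  set P : ℕ → Prop := fun i => a i ≤ x with hP
  have hP0 : P 0 := by simp [hP, h0, hx]
  set l := Nat.findGreatest P k with hl
  have hlk : l ≤ k := Nat.findGreatest_le k
  have hPl : P l := Nat.findGreatest_spec (Nat.zero_le k) hP0
  have hlne : l ≠ k := by
    intro h
    rw [h] at hPl
    simp only [hP, h1] at hPl
    linarith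
  have hlk' : l < k := lt_of_le_of_ne hlk hlne
  have hgt : x < a (l + 1) := by
    have h := Nat.findGreatest_is_greatest (Nat.lt_succ_self l) hlk'
    simp only [hP] at h
    exact lt_of_not_ge (hl ▸ h)
  have hyle : y ≤ a (l + 1) := by
    by_contra hcon
    exact havoid (l + 1) hlk' ⟨hgt, lt_of_not_ge hcon⟩
  exact ⟨l, hlk', hPl, hyle⟩

/-- All points reachable from the finite set `A` in at most `t` steps of the maps `T j`. -/
noncomputable def orbitSet {n : ℕ} (T : Fin n → ℝ → ℝ) (A : Finset ℝ) : ℕ → Finset ℝ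
  | 0 => A
  | t + 1 => orbitSet T A t ∪ Finset.univ.biUnion (fun j => (orbitSet T A t).image (T j))

lemma orbitSet_mono {n : ℕ} (T : Fin n → ℝ → ℝ) (A : Finset ℝ) {s t : ℕ} (h : s ≤ t) :
    orbitSet T A s ⊆ orbitSet T A t := by
  induction t with
  | zero => rw [Nat.le_zero.mp h]
  | succ t ih =>
    rcases eq_or_lt_of_le h with rfl | h'
    · exact Finset.Subset.refl _
    · exact (ih (Nat.lt_succ_iff.mp h')).trans Finset.subset_union_left

lemma orbitSet_map {n : ℕ} (T : Fin n → ℝ → ℝ) (A : Finset ℝ) {t : ℕ} (j : Fin n) {x : ℝ}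
    (hx : x ∈ orbitSet T A t) : T j x ∈ orbitSet T A (t + 1) := by
  refine Finset.mem_union_right _ (Finset.mem_biUnion.mpr ⟨j, Finset.mem_univ j, ?_⟩)
  exact Finset.mem_image_of_mem _ hx

/-- Let `T 1, …, T n` be finitely many expanding, piecewise monotone, continuous maps
from `[0,1]` to `[0,1]`. Then for every `ε > 0` there is `γ > 0` such that for every
nonautonomous system `(f_i)` consisting of maps from this family, and every interval
`U ⊆ [0,1]` with `|U| ≥ ε`, we have `|f_0^i(U)| ≥ γ` for all `i ≥ 0`. -/
theorem stmt_1 (n : ℕ) (T : Fin n → ℝ → ℝ)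
    (hmaps : ∀ j, MapsTo (T j) (Icc 0 1) (Icc 0 1))
    (hcont : ∀ j, ContinuousOn (T j) (Icc 0 1))
    (hexp : ∀ j, PiecewiseMonotoneExpanding (T j)) :
    ∀ ε : ℝ, 0 < ε → ∃ γ : ℝ, 0 < γ ∧
      ∀ f : ℕ → ℝ → ℝ, (∀ i, ∃ j, f i = T j) →
        ∀ U : Set ℝ, U ⊆ Icc 0 1 → U.OrdConnected → U.Nontrivial →
          ENNReal.ofReal ε ≤ volume U →
          ∀ i : ℕ, ENNReal.ofReal γ ≤ volume (compSeq f i '' U) := by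
  classical
  intro ε hε
  rcases Nat.eq_zero_or_pos n with rfl | hn
  · refine ⟨1, one_pos, ?_⟩
    intro f hf
    obtain ⟨j, -⟩ := hf 0
    exact j.elim0
  -- extract data
  simp only [PiecewiseMonotoneExpanding] at hexp
  choose k a α hα hk ha0 ha1 hinc hprop using hexp
  set j0 : Fin n := ⟨0, hn⟩ with hj0
  -- uniform expansion rate
  set αm : ℝ := Finset.univ.inf' (Finset.univ_nonempty_iff.mpr ⟨j0⟩) α with hαmdef
  have hαm : 1 < αm := by
    rw [hαmdef, Finset.lt_inf'_iff]
    exact fun j _ => hα j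
  have hαmle : ∀ j, αm ≤ α j := fun j => Finset.inf'_le _ (Finset.mem_univ j)
  have hαm0 : 0 < αm := by linarith
  -- the set of all partition points
  set A : Finset ℝ := Finset.univ.biUnion
    (fun j => (Finset.range (k j + 1)).image (a j)) with hAdef
  have hmemA : ∀ (j : Fin n) (i : ℕ), i ≤ k j → a j i ∈ A := by
    intro j i hi
    rw [hAdef]
    exact Finset.mem_biUnion.mpr ⟨j, Finset.mem_univ j,
      Finset.mem_image_of_mem _ (Finset.mem_range.mpr (Nat.lt_succ_of_le hi))⟩
  have h0A : (0 : ℝ) ∈ A := ha0 j0 ▸ hmemA j0 0 (Nat.zero_le _)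
  have h1A : (1 : ℝ) ∈ A := ha1 j0 ▸ hmemA j0 (k j0) le_rfl
  -- choose m with αm ^ m > 2
  obtain ⟨m, hm⟩ : ∃ m : ℕ, 2 < αm ^ m := pow_unbounded_of_one_lt 2 hαm
  have hm1 : 1 ≤ m := by
    rcases Nat.eq_zero_or_pos m with rfl | h
    · norm_num at hm
    · exact h
  set B : Finset ℝ := orbitSet T A m with hBdef
  have hAB : A ⊆ B := orbitSet_mono T A (Nat.zero_le m)
  -- minimal gap inside B
  obtain ⟨ρ, hρpos, hρkey⟩ :
      ∃ ρ : ℝ, 0 < ρ ∧ ∀ b₁ ∈ B, ∀ b₂ ∈ B, |b₁ - b₂| < ρ → b₁ = b₂ := by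
    have hBB : ∀ b₁ ∈ B, ∀ b₂ ∈ B, b₁ ≠ b₂ →
        |b₁ - b₂| ∈ ((B ×ˢ B).filter (fun p => p.1 ≠ p.2)).image (fun p => |p.1 - p.2|) := by
      intro b₁ hb₁ b₂ hb₂ hne
      exact Finset.mem_image.mpr ⟨(b₁, b₂),
        Finset.mem_filter.mpr ⟨Finset.mem_product.mpr ⟨hb₁, hb₂⟩, hne⟩, rfl⟩
    have hDne : (((B ×ˢ B).filter (fun p => p.1 ≠ p.2)).image
        (fun p => |p.1 - p.2|)).Nonempty :=
      ⟨_, hBB 0 (hAB h0A) 1 (hAB h1A) (by norm_num)⟩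
    refine ⟨Finset.min' _ hDne, ?_, ?_⟩
    · have h := Finset.min'_mem _ hDne
      obtain ⟨p, hp, hps⟩ := Finset.mem_image.mp h
      have hne := (Finset.mem_filter.mp hp).2
      rw [← hps]
      exact abs_sub_pos.mpr hne
    · intro b₁ hb₁ b₂ hb₂ hlt
      by_contra hne
      exact absurd (Finset.min'_le _ _ (hBB b₁ hb₁ b₂ hb₂ hne)) (not_le.mpr hlt)
  obtain ⟨c, hc, hcρ, hcε⟩ : ∃ c : ℝ, 0 < c ∧ c ≤ ρ ∧ c ≤ ε / 2 :=
    ⟨min ρ (ε / 2), lt_min hρpos (by linarith), min_le_left _ _, min_le_right _ _⟩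
  refine ⟨c / 2, by linarith, ?_⟩
  intro f hf U hU hconn hnt hvol
  -- the initial interval
  have hUne : U.Nonempty := hnt.nonempty
  have hbddA : BddAbove U := ⟨1, fun z hz => (hU hz).2⟩
  have hbddB : BddBelow U := ⟨0, fun z hz => (hU hz).1⟩
  have hdiam : ε ≤ sSup U - sInf U := by
    have hsub : U ⊆ Icc (sInf U) (sSup U) :=
      fun z hz => ⟨csInf_le hbddB hz, le_csSup hbddA hz⟩
    have h1 : ENNReal.ofReal ε ≤ ENNReal.ofReal (sSup U - sInf U) := by
      calc ENNReal.ofReal ε ≤ volume U := hvol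
        _ ≤ volume (Icc (sInf U) (sSup U)) := measure_mono hsub
        _ = ENNReal.ofReal (sSup U - sInf U) := Real.volume_Icc
    rcases ENNReal.ofReal_le_ofReal_iff'.mp h1 with h | h
    · exact h
    · linarith
  set x₀ : ℝ := sInf U + ε / 4 with hx₀def
  set y₀ : ℝ := x₀ + ε / 2 with hy₀def
  have hIccU : Icc x₀ y₀ ⊆ U := by
    intro z hz
    have h1 : sInf U < z := by
      have := hz.1; rw [hx₀def] at this; linarith
    have h2 : z < sSup U := by
      have := hz.2; rw [hy₀def, hx₀def] at this; linarith
    obtain ⟨u, huU, hu⟩ := (csInf_lt_iff hbddB hUne).mp h1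
    obtain ⟨v, hvU, hv⟩ := (lt_csSup_iff hbddA hUne).mp h2
    exact hconn.out huU hvU ⟨hu.le, hv.le⟩
  -- the main induction
  suffices H : ∀ i : ℕ, ∃ x y : ℝ, x < y ∧ Icc x y ⊆ compSeq f i '' U ∧
      Icc x y ⊆ Icc 0 1 ∧
      (c ≤ y - x ∨ ∃ t, 0 < t ∧ t ≤ m ∧
        (x ∈ orbitSet T A t ∨ y ∈ orbitSet T A t) ∧ c * αm ^ t / 2 ≤ y - x) by
    intro i
    obtain ⟨x, y, hxy, hsub, -, hstate⟩ := H i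
    have hlen : c / 2 ≤ y - x := by
      rcases hstate with h | ⟨t, ht0, htm, -, h⟩
      · linarith
      · have h1 : (1 : ℝ) ≤ αm ^ t := one_le_pow₀ hαm.le
        have h2 := mul_le_mul_of_nonneg_left h1 hc.le
        linarith
    calc ENNReal.ofReal (c / 2) ≤ ENNReal.ofReal (y - x) := ENNReal.ofReal_le_ofReal hlen
      _ = volume (Icc x y) := Real.volume_Icc.symm
      _ ≤ volume (compSeq f i '' U) := measure_mono hsub
  intro i
  induction i with
  | zero =>
    refine ⟨x₀, y₀, by rw [hy₀def]; linarith, ?_, ?_, Or.inl (by rw [hy₀def]; linarith)⟩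
    · simpa [compSeq, image_id] using hIccU
    · exact hIccU.trans hU
  | succ i ih =>
    obtain ⟨x, y, hxy, hsub, hI, hstate⟩ := ih
    obtain ⟨j, hj⟩ := hf i
    have hx0 : (0 : ℝ) ≤ x := (hI ⟨le_rfl, hxy.le⟩).1
    have hy1 : y ≤ 1 := (hI ⟨hxy.le, le_rfl⟩).2
    have himg : compSeq f (i + 1) '' U = T j '' (compSeq f i '' U) := by
      rw [show compSeq f (i + 1) = f i ∘ compSeq f i from rfl, image_comp, hj]
    -- one expansion step on a subinterval of [x, y] avoiding partition points
    have hstep : ∀ p q : ℝ, x ≤ p → p < q → q ≤ y → (∀ b ∈ A, b ∉ Ioo p q) →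
        ∃ x' y' : ℝ, x' < y' ∧ Icc x' y' ⊆ compSeq f (i + 1) '' U ∧
          Icc x' y' ⊆ Icc 0 1 ∧ αm * (q - p) ≤ y' - x' ∧
          (x' = T j p ∨ x' = T j q) ∧ (y' = T j p ∨ y' = T j q) := by
      intro p q hxp hpq hqy havoid
      have hpq01 : Icc p q ⊆ Icc 0 1 := (Icc_subset_Icc hxp hqy).trans hI
      have hp0 : 0 ≤ p := by linarith
      have hq1 : q ≤ 1 := by linarith
      obtain ⟨l, hlk, hlp, hql⟩ := exists_piece (k j) (a j) (ha0 j) (ha1 j) p q hp0 hpq hq1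
        (fun ι hι => havoid (a j ι) (hmemA j ι hι))
      have hmemp : p ∈ Icc (a j l) (a j (l + 1)) := ⟨hlp, le_trans hpq.le hql⟩
      have hmemq : q ∈ Icc (a j l) (a j (l + 1)) := ⟨le_trans hlp hpq.le, hql⟩
      have hexp' := (hprop j l hlk).2 p hmemp q hmemq
      have habs : |p - q| = q - p := by rw [abs_sub_comm]; exact abs_of_nonneg (by linarith)
      have hTp : T j p ∈ Icc (0 : ℝ) 1 := hmaps j (hpq01 ⟨le_rfl, hpq.le⟩)
      have hTq : T j q ∈ Icc (0 : ℝ) 1 := hmaps j (hpq01 ⟨hpq.le, le_rfl⟩)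
      have hlen' : αm * (q - p) ≤ max (T j p) (T j q) - min (T j p) (T j q) := by
        rw [max_sub_min_eq_abs]
        calc αm * (q - p) ≤ α j * (q - p) :=
              mul_le_mul_of_nonneg_right (hαmle j) (by linarith)
          _ = α j * |p - q| := by rw [habs]
          _ ≤ |T j p - T j q| := hexp'
          _ = |T j q - T j p| := abs_sub_comm _ _
      have hlt : min (T j p) (T j q) < max (T j p) (T j q) := by
        have : 0 < αm * (q - p) := mul_pos hαm0 (by linarith)
        linarith
      have hIVT : uIcc (T j p) (T j q) ⊆ T j '' uIcc p q :=
        intermediate_value_uIcc ((hcont j).mono (by rw [uIcc_of_le hpq.le]; exact hpq01))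
      have hicceq : Icc (min (T j p) (T j q)) (max (T j p) (T j q)) = uIcc (T j p) (T j q) := by
        exact rfl
      refine ⟨min (T j p) (T j q), max (T j p) (T j q), hlt, ?_, ?_, hlen',
        min_choice _ _, max_choice _ _⟩
      · calc Icc (min (T j p) (T j q)) (max (T j p) (T j q)) = uIcc (T j p) (T j q) := hicceq
          _ ⊆ T j '' uIcc p q := hIVT
          _ = T j '' Icc p q := by rw [uIcc_of_le hpq.le]
          _ ⊆ T j '' (compSeq f i '' U) :=
              Set.image_mono ((Icc_subset_Icc hxp hqy).trans hsub)
          _ = compSeq f (i + 1) '' U := himg.symm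
      · intro z hz
        exact ⟨le_trans (le_min hTp.1 hTq.1) hz.1, le_trans hz.2 (max_le hTp.2 hTq.2)⟩
    rcases le_or_gt c (y - x) with hbig | hsmall
    · -- big case: trim to length c, then either grow or fold
      set y₁ : ℝ := x + c with hy₁def
      clear_value y₁
      have hy₁ : y₁ ≤ y := by rw [hy₁def]; linarith
      have hxy₁ : x < y₁ := by rw [hy₁def]; linarith
      by_cases hA : ∀ b ∈ A, b ∉ Ioo x y₁
      · obtain ⟨x', y', h1, h2, h3, h4, -, -⟩ := hstep x y₁ le_rfl hxy₁ hy₁ hA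
        refine ⟨x', y', h1, h2, h3, Or.inl ?_⟩
        have hyx : y₁ - x = c := by rw [hy₁def]; ring
        rw [hyx] at h4
        have h5 := mul_lt_mul_of_pos_right hαm hc
        linarith
      · push_neg at hA
        obtain ⟨b, hbA, hbI⟩ := hA
        have huniq : ∀ b' ∈ A, b' ∈ Ioo x y₁ → b' = b := by
          intro b' hb' hmem
          refine hρkey b' (hAB hb') b (hAB hbA) ?_
          have h1 : |b' - b| < y₁ - x := by
            rw [abs_sub_lt_iff]
            exact ⟨by linarith [hmem.1, hmem.2, hbI.1, hbI.2],
              by linarith [hmem.1, hmem.2, hbI.1, hbI.2]⟩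
          rw [hy₁def] at h1
          linarith
        have hT1 : T j b ∈ orbitSet T A 1 := orbitSet_map T A j hbA
        rcases le_or_gt (c / 2) (y₁ - b) with hside | hside
        · -- use the right half [b, y₁]
          have havoid : ∀ b' ∈ A, b' ∉ Ioo b y₁ := by
            intro b' hb' hmem
            have := huniq b' hb' ⟨lt_trans hbI.1 hmem.1, hmem.2⟩
            rw [this] at hmem
            exact lt_irrefl b hmem.1
          obtain ⟨x', y', h1, h2, h3, h4, hx', hy'⟩ :=
            hstep b y₁ hbI.1.le hbI.2 hy₁ havoid
          have hanch : x' = T j b ∨ y' = T j b := by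
            rcases hx' with h | h
            · exact Or.inl h
            · rcases hy' with h' | h'
              · exact Or.inr h'
              · rw [h, ← h'] at h1; exact absurd h1 (lt_irrefl _)
          refine ⟨x', y', h1, h2, h3, Or.inr ⟨1, one_pos, hm1, ?_, ?_⟩⟩
          · rcases hanch with h | h
            · exact Or.inl (h ▸ hT1)
            · exact Or.inr (h ▸ hT1)
          · have h5 : αm * (c / 2) ≤ αm * (y₁ - b) :=
              mul_le_mul_of_nonneg_left hside hαm0.le
            rw [pow_one]
            linarith
        · -- use the left half [x, b]
          have hside2 : c / 2 ≤ b - x := by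
            have : y₁ - x = c := by rw [hy₁def]; ring
            linarith
          have havoid : ∀ b' ∈ A, b' ∉ Ioo x b := by
            intro b' hb' hmem
            have := huniq b' hb' ⟨hmem.1, lt_trans hmem.2 hbI.2⟩
            rw [this] at hmem
            exact lt_irrefl b hmem.2
          obtain ⟨x', y', h1, h2, h3, h4, hx', hy'⟩ :=
            hstep x b le_rfl hbI.1 (by linarith [hbI.2]) havoid
          have hanch : x' = T j b ∨ y' = T j b := by
            rcases hx' with h | h
            · rcases hy' with h' | h'
              · rw [h, ← h'] at h1; exact absurd h1 (lt_irrefl _)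
              · exact Or.inr h'
            · exact Or.inl h
          refine ⟨x', y', h1, h2, h3, Or.inr ⟨1, one_pos, hm1, ?_, ?_⟩⟩
          · rcases hanch with h | h
            · exact Or.inl (h ▸ hT1)
            · exact Or.inr (h ▸ hT1)
          · have h5 : αm * (c / 2) ≤ αm * (b - x) :=
              mul_le_mul_of_nonneg_left hside2 hαm0.le
            rw [pow_one]
            linarith
    · -- small case: must be anchored; then no partition point inside, pure growth
      have hanc' : ∃ t, 0 < t ∧ t ≤ m ∧
          (x ∈ orbitSet T A t ∨ y ∈ orbitSet T A t) ∧ c * αm ^ t / 2 ≤ y - x := by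
        rcases hstate with h | h
        · linarith
        · exact h
      obtain ⟨t, ht0, htm, hanc, hlen⟩ := hanc'
      have htm' : t < m := by
        rcases lt_or_eq_of_le htm with h | rfl
        · exact h
        · exfalso
          have h2m := mul_lt_mul_of_pos_left hm hc
          linarith
      have htB : orbitSet T A t ⊆ B := orbitSet_mono T A htm
      have hnoA : ∀ b ∈ A, b ∉ Ioo x y := by
        intro b hb hmem
        rcases hanc with he | he
        · have : b = x := by
            refine hρkey b (hAB hb) x (htB he) ?_
            have : |b - x| < y - x := by
              rw [abs_of_pos (by linarith [hmem.1])]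
              linarith [hmem.2]
            linarith
          rw [this] at hmem
          exact lt_irrefl x hmem.1
        · have : b = y := by
            refine hρkey b (hAB hb) y (htB he) ?_
            have : |b - y| < y - x := by
              rw [abs_of_neg (by linarith [hmem.2])]
              linarith [hmem.1]
            linarith
          rw [this] at hmem
          exact lt_irrefl y hmem.2
      obtain ⟨x', y', h1, h2, h3, h4, hx', hy'⟩ := hstep x y le_rfl hxy le_rfl hnoA
      refine ⟨x', y', h1, h2, h3, Or.inr ⟨t + 1, Nat.succ_pos t, htm', ?_, ?_⟩⟩
      · rcases hanc with he | he
        · have hTx : T j x ∈ orbitSet T A (t + 1) := orbitSet_map T A j he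
          rcases hx' with h | h
          · exact Or.inl (h ▸ hTx)
          · rcases hy' with h' | h'
            · exact Or.inr (h' ▸ hTx)
            · rw [h, ← h'] at h1; exact absurd h1 (lt_irrefl _)
        · have hTy : T j y ∈ orbitSet T A (t + 1) := orbitSet_map T A j he
          rcases hx' with h | h
          · rcases hy' with h' | h'
            · rw [h, ← h'] at h1; exact absurd h1 (lt_irrefl _)
            · exact Or.inr (h' ▸ hTy)
          · exact Or.inl (h ▸ hTy)
      · have h5 : αm * (c * αm ^ t / 2) ≤ αm * (y - x) :=
          mul_le_mul_of_nonneg_left hlen (by linarith)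
        have h6 : αm * (c * αm ^ t / 2) = c * αm ^ (t + 1) / 2 := by
          rw [pow_succ]; ring
        linarith
end

section
/- There exist finitely many continuous, piecewise monotone (in fact piecewise linear), surjective maps T_1, …, T_n from [0,1] to [0,1], each satisfying |T_j(x) − T_j(y)| ≥ |x − y| for all x, y lying in the same interval of monotonicity of T_j, together with a sequence (f_i)_{i=0}^∞ with each f_i ∈ {T_1, …, T_n} and a nondegenerate interval J ⊆ [0,1], such that lim_{n→∞} |f_0^n(J)| = 0. (In particular, the non-shrinking theorem for expanding maps fails if the expansion rates α_j > 1 are weakened to α_j ≥ 1, even for surjective piecewise linear maps.) -/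
open Set MeasureTheory

/-- `T : [0,1] → [0,1]` is piecewise linear (hence piecewise monotone) with all slopes of
absolute value `≥ 1`; in particular `|T x - T y| ≥ |x - y|` for `x, y` in the same
interval of monotonicity. The partition points are `0 = a 0 < a 1 < ⋯ < a k = 1`. -/
def PiecewiseLinearNonContracting (T : ℝ → ℝ) : Prop :=
  ∃ (k : ℕ) (a : ℕ → ℝ), 0 < k ∧ a 0 = 0 ∧ a k = 1 ∧
    (∀ i < k, a i < a (i + 1)) ∧
    (∀ i < k,
      (∃ c d : ℝ, 1 ≤ |c| ∧ ∀ x ∈ Icc (a i) (a (i + 1)), T x = c * x + d) ∧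
      (MonotoneOn T (Icc (a i) (a (i + 1))) ∨ AntitoneOn T (Icc (a i) (a (i + 1)))) ∧
      ∀ x ∈ Icc (a i) (a (i + 1)), ∀ y ∈ Icc (a i) (a (i + 1)),
        |x - y| ≤ |T x - T y|)

namespace NSAux

noncomputable def gam : ℝ := Real.sqrt 2 / 128

lemma gam_lb : 0.011 < gam := by
  have h : (1.414:ℝ) < Real.sqrt 2 := by
    nlinarith [Real.sq_sqrt (by norm_num : (0:ℝ) ≤ 2), Real.sqrt_nonneg 2]
  unfold gam; nlinarith

lemma gam_ub : gam < 0.0111 := by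
  have h : Real.sqrt 2 < 1.415 := by
    nlinarith [Real.sq_sqrt (by norm_num : (0:ℝ) ≤ 2), Real.sqrt_nonneg 2]
  unfold gam; nlinarith

lemma gam_irr : Irrational gam := by
  have := irrational_sqrt_two
  have h : gam = Real.sqrt 2 * (1/128 : ℚ) := by
    push_cast [gam]; ring
  rw [h]
  exact (irrational_sqrt_two.mul_ratCast (by norm_num))

noncomputable def mapA : ℝ → ℝ := fun x => max (min x (1 - x)) (3*x - 2)
noncomputable def mapB : ℝ → ℝ := fun x => max (min x (1 + gam - x)) (2*x - 1)
noncomputable def mapR : ℝ → ℝ := fun x => min (x + 1/32) (32*(1 - x))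
noncomputable def mapD : ℝ → ℝ := fun x => max (x - 1/32) (1 - 32*x)

lemma A_eq1 {x : ℝ} (h : x ≤ 1/2) : mapA x = x := by
  unfold mapA
  rw [min_eq_left (by linarith), max_eq_left (by linarith)]

lemma A_eq2 {x : ℝ} (h1 : 1/2 ≤ x) (h2 : x ≤ 3/4) : mapA x = 1 - x := by
  unfold mapA
  rw [min_eq_right (by linarith), max_eq_left (by linarith)]

lemma A_eq3 {x : ℝ} (h : 3/4 ≤ x) : mapA x = 3*x - 2 := by
  unfold mapA
  rw [min_eq_right (by linarith), max_eq_right (by linarith)]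

lemma B_eq1 {x : ℝ} (h : x ≤ 1/2 + gam/2) : mapB x = x := by
  have g1 := gam_lb; have g2 := gam_ub
  unfold mapB
  rw [min_eq_left (by linarith), max_eq_left (by linarith)]

lemma B_eq2 {x : ℝ} (h1 : 1/2 + gam/2 ≤ x) (h2 : x ≤ (2 + gam)/3) : mapB x = 1 + gam - x := by
  unfold mapB
  rw [min_eq_right (by linarith), max_eq_left (by linarith)]

lemma B_eq3 {x : ℝ} (h : (2 + gam)/3 ≤ x) : mapB x = 2*x - 1 := by
  have g1 := gam_lb; have g2 := gam_ub
  unfold mapB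
  rw [min_eq_right (by linarith), max_eq_right (by linarith)]

lemma R_eq1 {x : ℝ} (h : x ≤ 31/32) : mapR x = x + 1/32 := by
  unfold mapR; rw [min_eq_left (by linarith)]

lemma R_eq2 {x : ℝ} (h : 31/32 ≤ x) : mapR x = 32*(1 - x) := by
  unfold mapR; rw [min_eq_right (by linarith)]

lemma D_eq1 {x : ℝ} (h : 1/32 ≤ x) : mapD x = x - 1/32 := by
  unfold mapD; rw [max_eq_left (by linarith)]

lemma D_eq2 {x : ℝ} (h : x ≤ 1/32) : mapD x = 1 - 32*x := by
  unfold mapD; rw [max_eq_right (by linarith)]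

lemma contA : Continuous mapA := by
  unfold mapA; fun_prop

lemma contB : Continuous mapB := by
  unfold mapB; fun_prop

lemma contR : Continuous mapR := by
  unfold mapR; fun_prop

lemma contD : Continuous mapD := by
  unfold mapD; fun_prop

lemma mapsA : MapsTo mapA (Icc 0 1) (Icc 0 1) := by
  intro x hx; obtain ⟨h0, h1⟩ := hx
  constructor
  · exact le_trans (le_min h0 (by linarith)) (le_max_left _ _)
  · apply max_le (le_trans (min_le_left _ _) h1) (by linarith)

lemma mapsB : MapsTo mapB (Icc 0 1) (Icc 0 1) := by
  have g1 := gam_lb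
  intro x hx; obtain ⟨h0, h1⟩ := hx
  constructor
  · exact le_trans (le_min h0 (by linarith)) (le_max_left _ _)
  · apply max_le (le_trans (min_le_left _ _) h1) (by linarith)

lemma mapsR : MapsTo mapR (Icc 0 1) (Icc 0 1) := by
  intro x hx; obtain ⟨h0, h1⟩ := hx
  constructor
  · exact le_min (by linarith) (by linarith)
  · rcases le_or_gt x (31/32) with h | h
    · exact le_trans (min_le_left _ _) (by linarith)
    · exact le_trans (min_le_right _ _) (by linarith)

lemma mapsD : MapsTo mapD (Icc 0 1) (Icc 0 1) := by
  intro x hx; obtain ⟨h0, h1⟩ := hx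
  constructor
  · rcases le_or_gt x (1/32) with h | h
    · exact le_trans (by linarith) (le_max_right _ _)
    · exact le_trans (by linarith : (0:ℝ) ≤ x - 1/32) (le_max_left _ _)
  · exact max_le (by linarith) (by linarith)

lemma surjA : mapA '' Icc 0 1 = Icc 0 1 := by
  apply Subset.antisymm (mapsA.image_subset)
  have hA0 : mapA 0 = 0 := by rw [A_eq1 (by norm_num)]
  have hA1 : mapA 1 = 1 := by rw [A_eq3 (by norm_num)]; ring
  have := intermediate_value_Icc (by norm_num : (0:ℝ) ≤ 1) contA.continuousOn
  rw [hA0, hA1] at this; exact this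

lemma surjB : mapB '' Icc 0 1 = Icc 0 1 := by
  have g1 := gam_lb; have g2 := gam_ub
  apply Subset.antisymm (mapsB.image_subset)
  have hB0 : mapB 0 = 0 := by rw [B_eq1 (by linarith)]
  have hB1 : mapB 1 = 1 := by rw [B_eq3 (by linarith)]; ring
  have := intermediate_value_Icc (by norm_num : (0:ℝ) ≤ 1) contB.continuousOn
  rw [hB0, hB1] at this; exact this

lemma surjR : mapR '' Icc 0 1 = Icc 0 1 := by
  apply Subset.antisymm (mapsR.image_subset)
  have h1 : mapR (31/32) = 1 := by rw [R_eq1 (by norm_num)]; norm_num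
  have h2 : mapR 1 = 0 := by rw [R_eq2 (by norm_num)]; ring
  have h := intermediate_value_Icc' (by norm_num : (31/32:ℝ) ≤ 1) contR.continuousOn
  rw [h1, h2] at h
  exact h.trans (image_mono (Icc_subset_Icc (by norm_num) le_rfl))

lemma surjD : mapD '' Icc 0 1 = Icc 0 1 := by
  apply Subset.antisymm (mapsD.image_subset)
  have h1 : mapD 0 = 1 := by rw [D_eq2 (by norm_num)]; ring
  have h2 : mapD (1/32) = 0 := by rw [D_eq1 (by norm_num)]; ring
  have h := intermediate_value_Icc' (by norm_num : (0:ℝ) ≤ 1/32) contD.continuousOn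
  rw [h1, h2] at h
  exact h.trans (image_mono (Icc_subset_Icc le_rfl (by norm_num)))

lemma affinePiece (f : ℝ → ℝ) (s : Set ℝ) (c d : ℝ) (hc : 1 ≤ |c|)
    (h : ∀ x ∈ s, f x = c * x + d) :
    (∃ c' d' : ℝ, 1 ≤ |c'| ∧ ∀ x ∈ s, f x = c' * x + d') ∧
    (MonotoneOn f s ∨ AntitoneOn f s) ∧
    ∀ x ∈ s, ∀ y ∈ s, |x - y| ≤ |f x - f y| := by
  refine ⟨⟨c, d, hc, h⟩, ?_, ?_⟩
  · rcases le_total 0 c with hc0 | hc0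
    · left; intro x hx y hy hxy
      rw [h x hx, h y hy]
      have := mul_le_mul_of_nonneg_left hxy hc0
      linarith
    · right; intro x hx y hy hxy
      rw [h x hx, h y hy]
      have := mul_le_mul_of_nonpos_left hxy hc0
      linarith
  · intro x hx y hy
    rw [h x hx, h y hy]
    have e : c * x + d - (c * y + d) = c * (x - y) := by ring
    rw [e, abs_mul]
    calc |x - y| = 1 * |x - y| := by ring
    _ ≤ |c| * |x - y| := mul_le_mul_of_nonneg_right hc (abs_nonneg _)

noncomputable def aA : ℕ → ℝ := fun i => if i = 0 then 0 else if i = 1 then 1/2 else if i = 2 then 3/4 else 1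

lemma plncA : PiecewiseLinearNonContracting mapA := by
  refine ⟨3, aA, by norm_num, by norm_num [aA], by norm_num [aA], ?_, ?_⟩
  · intro i hi
    interval_cases i <;> norm_num [aA]
  · intro i hi
    interval_cases i
    · have : Icc (aA 0) (aA 1) = Icc (0:ℝ) (1/2) := by norm_num [aA]
      rw [this]
      exact affinePiece _ _ 1 0 (by norm_num)
        (fun x hx => by rw [A_eq1 hx.2]; ring)
    · have : Icc (aA 1) (aA 2) = Icc (1/2:ℝ) (3/4) := by norm_num [aA]
      rw [this]
      exact affinePiece _ _ (-1) 1 (by norm_num)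
        (fun x hx => by rw [A_eq2 hx.1 hx.2]; ring)
    · have : Icc (aA 2) (aA 3) = Icc (3/4:ℝ) 1 := by norm_num [aA]
      rw [this]
      exact affinePiece _ _ 3 (-2) (by norm_num)
        (fun x hx => by rw [A_eq3 hx.1]; ring)

lemma compSeq_congr {f g : ℕ → ℝ → ℝ} {N : ℕ} (h : ∀ i < N, f i = g i) :
    compSeq f N = compSeq g N := by
  induction N with
  | zero => rfl
  | succ n ih =>
    show f n ∘ compSeq f n = g n ∘ compSeq g n
    rw [ih (fun i hi => h i (by omega)), h n (by omega)]

lemma compSeq_add (f : ℕ → ℝ → ℝ) (a b : ℕ) :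
    compSeq f (a + b) = compSeq (fun i => f (a + i)) b ∘ compSeq f a := by
  induction b with
  | zero => rfl
  | succ n ih =>
    show compSeq f (a + n + 1) = _
    show f (a + n) ∘ compSeq f (a + n) = _
    rw [ih]; rfl

/-- `w` is a word of length `N` of family maps taking set `s` to set `t`, with all
intermediate images of volume at most `ℓ`. -/
def Steps (F : (ℝ → ℝ) → Prop) (w : ℕ → ℝ → ℝ) (N : ℕ) (s t : Set ℝ) (ℓ : ℝ) : Prop :=
  (∀ i < N, F (w i)) ∧ compSeq w N '' s = t ∧
    ∀ i ≤ N, volume (compSeq w i '' s) ≤ ENNReal.ofReal ℓ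

lemma Steps.zero {F} {s : Set ℝ} {ℓ : ℝ} (hs : volume s ≤ ENNReal.ofReal ℓ) :
    Steps F (fun _ => id) 0 s s ℓ := by
  refine ⟨by omega, by simp [compSeq], ?_⟩
  intro i hi; interval_cases i; simpa [compSeq] using hs

lemma Steps.single {F} {g : ℝ → ℝ} {s t : Set ℝ} {ℓ : ℝ} (hg : F g) (himg : g '' s = t)
    (hs : volume s ≤ ENNReal.ofReal ℓ) (ht : volume t ≤ ENNReal.ofReal ℓ) :
    Steps F (fun _ => g) 1 s t ℓ := by
  have h1 : compSeq (fun _ => g) 1 '' s = t := by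
    show (g ∘ id) '' s = t; rwa [Function.comp_id]
  refine ⟨fun i _ => hg, h1, ?_⟩
  intro i hi
  interval_cases i
  · simpa [compSeq] using hs
  · rw [h1]; exact ht

lemma Steps.comp {F} {w1 w2 : ℕ → ℝ → ℝ} {N1 N2 : ℕ} {s t u : Set ℝ} {ℓ : ℝ}
    (h1 : Steps F w1 N1 s t ℓ) (h2 : Steps F w2 N2 t u ℓ) :
    Steps F (fun i => if i < N1 then w1 i else w2 (i - N1)) (N1 + N2) s u ℓ := by
  obtain ⟨hf1, hi1, hv1⟩ := h1
  obtain ⟨hf2, hi2, hv2⟩ := h2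
  set W := fun i => if i < N1 then w1 i else w2 (i - N1) with hW
  have e1 : ∀ i ≤ N1, compSeq W i '' s = compSeq w1 i '' s := by
    intro i hi
    rw [compSeq_congr (f := W) (g := w1) (fun j hj => by
      simp only [hW]; rw [if_pos (by omega)])]
  have e2 : ∀ j ≤ N2, compSeq W (N1 + j) '' s = compSeq w2 j '' t := by
    intro j hj
    rw [compSeq_add W N1 j, Set.image_comp, e1 N1 le_rfl, hi1]
    have e3 : compSeq (fun i => W (N1 + i)) j = compSeq w2 j := by
      apply compSeq_congr
      intro i hi
      simp only [hW]
      rw [if_neg (by omega), Nat.add_sub_cancel_left]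
    rw [e3]
  refine ⟨?_, ?_, ?_⟩
  · intro i hi
    by_cases h : i < N1
    · simpa [hW, h] using hf1 i h
    · have : W i = w2 (i - N1) := by simp [hW, h]
      rw [this]; exact hf2 _ (by omega)
  · rw [e2 N2 le_rfl, hi2]
  · intro i hi
    rcases le_or_gt i N1 with h | h
    · rw [e1 i h]; exact hv1 i h
    · have : i = N1 + (i - N1) := by omega
      rw [this, e2 (i - N1) (by omega)]
      exact hv2 _ (by omega)

def Fam : (ℝ → ℝ) → Prop := fun g => g = mapA ∨ g = mapB ∨ g = mapR ∨ g = mapD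

lemma famA : Fam mapA := Or.inl rfl
lemma famB : Fam mapB := Or.inr (Or.inl rfl)
lemma famR : Fam mapR := Or.inr (Or.inr (Or.inl rfl))
lemma famD : Fam mapD := Or.inr (Or.inr (Or.inr rfl))

lemma vol_le {a b ℓ : ℝ} (h : b - a ≤ ℓ) : volume (Icc a b) ≤ ENNReal.ofReal ℓ := by
  rw [Real.volume_Icc]; exact ENNReal.ofReal_le_ofReal h

lemma Steps.cast {F w N} {s s' t t' : Set ℝ} {ℓ : ℝ} (h : Steps F w N s t ℓ)
    (hs : s = s') (ht : t = t') : Steps F w N s' t' ℓ := by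
  subst hs; subst ht; exact h

lemma Icc_congr {a b a' b' : ℝ} (h1 : a = a') (h2 : b = b') : Icc a b = Icc a' b' := by
  rw [h1, h2]

-- image lemmas
lemma imgR {u v : ℝ} (h1 : v ≤ 31/32) :
    mapR '' Icc u v = Icc (u + 1/32) (v + 1/32) := by
  rw [Set.image_congr (g := fun x => x + 1/32) (fun x hx => R_eq1 (le_trans hx.2 h1))]
  exact Set.image_add_const_Icc _ _ _

lemma imgD {u v : ℝ} (h1 : 1/32 ≤ u) :
    mapD '' Icc u v = Icc (u - 1/32) (v - 1/32) := by
  rw [Set.image_congr (g := fun x => x - 1/32) (fun x hx => D_eq1 (le_trans h1 hx.1))]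
  exact Set.image_sub_const_Icc _ _ _

lemma imgReflA {u v : ℝ} (h1 : 1/2 ≤ u) (h2 : v ≤ 3/4) :
    mapA '' Icc u v = Icc (1 - v) (1 - u) := by
  rw [Set.image_congr (g := fun x => 1 - x)
    (fun x hx => A_eq2 (le_trans h1 hx.1) (le_trans hx.2 h2))]
  exact Set.image_const_sub_Icc _ _ _

lemma imgReflB {u v : ℝ} (h1 : 1/2 + gam/2 ≤ u) (h2 : v ≤ (2 + gam)/3) :
    mapB '' Icc u v = Icc (1 + gam - v) (1 + gam - u) := by
  rw [Set.image_congr (g := fun x => 1 + gam - x)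
    (fun x hx => B_eq2 (le_trans h1 hx.1) (le_trans hx.2 h2))]
  exact Set.image_const_sub_Icc _ _ _

lemma imgFoldA {u v : ℝ} (h1 : 1 - v ≤ u) (h2 : u ≤ 1/2) (h3 : 1/2 ≤ v) (h4 : v ≤ 3/4) :
    mapA '' Icc u v = Icc (1 - v) (1/2) := by
  rw [← Set.Icc_union_Icc_eq_Icc h2 h3, Set.image_union]
  have e1 : mapA '' Icc u (1/2) = Icc u (1/2) := by
    have h : ∀ x ∈ Icc u (1/2:ℝ), mapA x = x := fun x hx => A_eq1 hx.2
    rw [Set.image_congr h, Set.image_id']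
  have e2 : mapA '' Icc (1/2) v = Icc (1 - v) (1/2) := by
    rw [imgReflA le_rfl h4]
    exact Icc_congr rfl (by norm_num)
  rw [e1, e2]
  exact Set.union_eq_self_of_subset_left (Set.Icc_subset_Icc h1 le_rfl)

-- single-move Steps wrappers; state = Icc (v - ℓ) v
lemma sR {ℓ v : ℝ} (hℓ : 0 ≤ ℓ) (h0 : 0 ≤ v - ℓ) (h1 : v ≤ 31/32) :
    Steps Fam (fun _ => mapR) 1 (Icc (v - ℓ) v) (Icc (v + 1/32 - ℓ) (v + 1/32)) ℓ := by
  refine Steps.single famR ?_ (vol_le (by linarith)) (vol_le (by linarith))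
  rw [imgR h1]; exact Icc_congr (by ring) rfl

lemma sD {ℓ v : ℝ} (hℓ : 0 ≤ ℓ) (h0 : 1/32 ≤ v - ℓ) :
    Steps Fam (fun _ => mapD) 1 (Icc (v - ℓ) v) (Icc (v - 1/32 - ℓ) (v - 1/32)) ℓ := by
  refine Steps.single famD ?_ (vol_le (by linarith)) (vol_le (by linarith))
  rw [imgD h0]; exact Icc_congr (by ring) rfl

lemma sReflA {ℓ v : ℝ} (hℓ : 0 ≤ ℓ) (h0 : 1/2 ≤ v - ℓ) (h1 : v ≤ 3/4) :
    Steps Fam (fun _ => mapA) 1 (Icc (v - ℓ) v) (Icc ((1 - v + ℓ) - ℓ) (1 - v + ℓ)) ℓ := by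
  refine Steps.single famA ?_ (vol_le (by linarith)) (vol_le (by linarith))
  rw [imgReflA h0 h1]; exact Icc_congr (by ring) (by ring)

lemma sReflB {ℓ v : ℝ} (hℓ : 0 ≤ ℓ) (h0 : 1/2 + gam/2 ≤ v - ℓ) (h1 : v ≤ (2 + gam)/3) :
    Steps Fam (fun _ => mapB) 1 (Icc ((v:ℝ) - ℓ) v)
      (Icc ((1 + gam - v + ℓ) - ℓ) (1 + gam - v + ℓ)) ℓ := by
  refine Steps.single famB ?_ (vol_le (by linarith)) (vol_le (by linarith))
  rw [imgReflB h0 h1]; exact Icc_congr (by ring) (by ring)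

lemma sFoldA {ℓ v : ℝ} (hℓ : 0 ≤ ℓ) (h1 : 1 - v ≤ v - ℓ) (h2 : v - ℓ ≤ 1/2) (h3 : 1/2 ≤ v)
    (h4 : v ≤ 3/4) :
    Steps Fam (fun _ => mapA) 1 (Icc (v - ℓ) v) (Icc (1 - v) (1/2)) ℓ := by
  refine Steps.single famA ?_ (vol_le (by linarith)) (vol_le (by linarith))
  exact imgFoldA h1 h2 h3 h4

-- gadgets
lemma gadgetP {ℓ w : ℝ} (hl0 : 0 < ℓ) (hl : ℓ ≤ 1/128) (h1 : 0.4 ≤ w) (h2 : w ≤ 0.44) :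
    ∃ N wd, Steps Fam wd N (Icc (w - ℓ) w)
      (Icc ((w + 1/32 + gam) - ℓ) (w + 1/32 + gam)) ℓ := by
  have g1 := gam_lb; have g2 := gam_ub
  have s1 := sR (ℓ := ℓ) (v := w) (by linarith) (by linarith) (by linarith)
  have s2 := sR (ℓ := ℓ) (v := w + 1/32) (by linarith) (by linarith) (by linarith)
  have s3 := sR (ℓ := ℓ) (v := w + 1/32 + 1/32) (by linarith) (by linarith) (by linarith)
  have s4 := sR (ℓ := ℓ) (v := w + 1/32 + 1/32 + 1/32) (by linarith) (by linarith) (by linarith)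
  have s5 := sReflA (ℓ := ℓ) (v := w + 1/32 + 1/32 + 1/32 + 1/32) (by linarith) (by linarith)
    (by linarith)
  set v5 : ℝ := 1 - (w + 1/32 + 1/32 + 1/32 + 1/32) + ℓ with hv5
  have s6 := sR (ℓ := ℓ) (v := v5) (by linarith) (by simp only [hv5]; linarith)
    (by simp only [hv5]; linarith)
  have s7 := sR (ℓ := ℓ) (v := v5 + 1/32) (by linarith) (by simp only [hv5]; linarith)
    (by simp only [hv5]; linarith)
  have s8 := sR (ℓ := ℓ) (v := v5 + 1/32 + 1/32) (by linarith) (by simp only [hv5]; linarith)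
    (by simp only [hv5]; linarith)
  have s9 := sReflB (ℓ := ℓ) (v := v5 + 1/32 + 1/32 + 1/32)
    (by linarith) (by simp only [hv5]; linarith) (by simp only [hv5]; linarith)
  have c := ((((((((s1.comp s2).comp s3).comp s4).comp s5).comp s6).comp s7).comp s8).comp s9)
  refine ⟨_, _, c.cast rfl (Icc_congr (by simp only [hv5]; ring) (by simp only [hv5]; ring))⟩

lemma gadgetM {ℓ w : ℝ} (hl0 : 0 < ℓ) (hl : ℓ ≤ 1/128) (h1 : 0.4 ≤ w) (h2 : w ≤ 0.44) :
    ∃ N wd, Steps Fam wd N (Icc (w - ℓ) w)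
      (Icc ((w + 1/32 - gam) - ℓ) (w + 1/32 - gam)) ℓ := by
  have g1 := gam_lb; have g2 := gam_ub
  have s1 := sR (ℓ := ℓ) (v := w) (by linarith) (by linarith) (by linarith)
  have s2 := sR (ℓ := ℓ) (v := w + 1/32) (by linarith) (by linarith) (by linarith)
  have s3 := sR (ℓ := ℓ) (v := w + 1/32 + 1/32) (by linarith) (by linarith) (by linarith)
  have s4 := sR (ℓ := ℓ) (v := w + 1/32 + 1/32 + 1/32) (by linarith) (by linarith) (by linarith)
  have s5 := sReflB (ℓ := ℓ) (v := w + 1/32 + 1/32 + 1/32 + 1/32) (by linarith) (by linarith)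
    (by linarith)
  set v5 : ℝ := 1 + gam - (w + 1/32 + 1/32 + 1/32 + 1/32) + ℓ with hv5
  have s6 := sR (ℓ := ℓ) (v := v5) (by linarith) (by simp only [hv5]; linarith)
    (by simp only [hv5]; linarith)
  have s7 := sR (ℓ := ℓ) (v := v5 + 1/32) (by linarith) (by simp only [hv5]; linarith)
    (by simp only [hv5]; linarith)
  have s8 := sR (ℓ := ℓ) (v := v5 + 1/32 + 1/32) (by linarith) (by simp only [hv5]; linarith)
    (by simp only [hv5]; linarith)
  have s9 := sReflA (ℓ := ℓ) (v := v5 + 1/32 + 1/32 + 1/32)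
    (by linarith) (by simp only [hv5]; linarith) (by simp only [hv5]; linarith)
  have c := ((((((((s1.comp s2).comp s3).comp s4).comp s5).comp s6).comp s7).comp s8).comp s9)
  refine ⟨_, _, c.cast rfl (Icc_congr (by simp only [hv5]; ring) (by simp only [hv5]; ring))⟩

lemma reach0 {ℓ : ℝ} (hl0 : 0 < ℓ) (hl : ℓ ≤ 1/128) :
    ∀ (k : ℕ) (n : ℤ), n.natAbs = k → ∀ v v' : ℝ, 1/16 ≤ v → v ≤ 3/4 → 1/16 ≤ v' → v' ≤ 3/4 →
    v' - v = n * (1/32) → ∃ N w, Steps Fam w N (Icc (v - ℓ) v) (Icc (v' - ℓ) v') ℓ := by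
  intro k
  induction k with
  | zero =>
    intro n hn v v' hv1 hv2 hv3 hv4 hd
    have hn0 : n = 0 := by omega
    subst hn0
    have : v' = v := by push_cast at hd; linarith
    subst this
    exact ⟨0, _, Steps.zero (vol_le (by linarith))⟩
  | succ k ih =>
    intro n hn v v' hv1 hv2 hv3 hv4 hd
    rcases lt_trichotomy n 0 with hneg | h0 | hpos
    · have hcast : (n:ℝ) ≤ -1 := by exact_mod_cast (by omega : n ≤ -1)
      have hle : v' ≤ v - 1/32 := by nlinarith
      have s1 := sD (ℓ := ℓ) (v := v) (le_of_lt hl0) (by linarith)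
      obtain ⟨N, w, hw⟩ := ih (n + 1) (by omega) (v - 1/32) v' (by linarith) (by linarith)
        hv3 hv4 (by push_cast; linarith)
      exact ⟨_, _, s1.comp hw⟩
    · omega
    · have hcast : (1:ℝ) ≤ (n:ℝ) := by exact_mod_cast (by omega : 1 ≤ n)
      have hge : v + 1/32 ≤ v' := by nlinarith
      have s1 := sR (ℓ := ℓ) (v := v) (le_of_lt hl0) (by linarith) (by linarith)
      obtain ⟨N, w, hw⟩ := ih (n - 1) (by omega) (v + 1/32) v' (by linarith) (by linarith)
        hv3 hv4 (by push_cast; linarith)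
      exact ⟨_, _, s1.comp hw⟩

lemma reach {ℓ : ℝ} (hl0 : 0 < ℓ) (hl : ℓ ≤ 1/128) :
    ∀ (K : ℕ) (m n : ℤ), m.natAbs = K → ∀ v v' : ℝ, 0.4 ≤ v → v ≤ 0.49 → 0.4 ≤ v' →
    v' ≤ 0.49 → v' - v = m * gam + n * (1/32) →
    ∃ N w, Steps Fam w N (Icc (v - ℓ) v) (Icc (v' - ℓ) v') ℓ := by
  intro K
  induction K with
  | zero =>
    intro m n hm v v' hv1 hv2 hv3 hv4 hd
    have hm0 : m = 0 := by omega
    subst hm0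
    exact reach0 hl0 hl n.natAbs n rfl v v' (by linarith) (by linarith) (by linarith)
      (by linarith) (by push_cast at hd ⊢; linarith)
  | succ K ih =>
    intro m n hm v v' hv1 hv2 hv3 hv4 hd
    have g1 := gam_lb; have g2 := gam_ub
    set k₀ : ℤ := ⌈(0.4 - v) * 32⌉ with hk₀
    have hk1 : (0.4 - v) * 32 ≤ (k₀ : ℝ) := Int.le_ceil _
    have hk2 : (k₀ : ℝ) < (0.4 - v) * 32 + 1 := Int.ceil_lt_add_one _
    set w₀ : ℝ := v + k₀ * (1/32) with hw₀
    have hw1 : 0.4 ≤ w₀ := by rw [hw₀]; linarith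
    have hw2 : w₀ ≤ 0.44 := by rw [hw₀]; linarith
    obtain ⟨N1, wd1, h1⟩ := reach0 hl0 hl k₀.natAbs k₀ rfl v w₀ (by linarith) (by linarith)
      (by linarith) (by linarith) (by rw [hw₀]; ring)
    rcases lt_trichotomy m 0 with hneg | h0 | hpos
    · obtain ⟨N2, wd2, h2⟩ := gadgetM hl0 hl hw1 hw2
      set w₁ : ℝ := w₀ + 1/32 - gam with hw₁
      obtain ⟨N3, wd3, h3⟩ := ih (m + 1) (n - k₀ - 1) (by omega) w₁ v'
        (by rw [hw₁]; linarith) (by rw [hw₁]; linarith) hv3 hv4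
        (by rw [hw₁, hw₀]; push_cast; linarith [hd])
      exact ⟨_, _, (h1.comp h2).comp h3⟩
    · omega
    · obtain ⟨N2, wd2, h2⟩ := gadgetP hl0 hl hw1 hw2
      set w₁ : ℝ := w₀ + 1/32 + gam with hw₁
      obtain ⟨N3, wd3, h3⟩ := ih (m - 1) (n - k₀ - 1) (by omega) w₁ v'
        (by rw [hw₁]; linarith) (by rw [hw₁]; linarith) hv3 hv4
        (by rw [hw₁, hw₀]; push_cast; linarith [hd])
      exact ⟨_, _, (h1.comp h2).comp h3⟩

-- the subgroup γℤ + (1/32)ℤ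
noncomputable def HH : AddSubgroup ℝ where
  carrier := {x : ℝ | ∃ m n : ℤ, x = m * gam + n * (1/32)}
  zero_mem' := ⟨0, 0, by push_cast; ring⟩
  add_mem' := by
    rintro a b ⟨m1, n1, rfl⟩ ⟨m2, n2, rfl⟩
    exact ⟨m1 + m2, n1 + n2, by push_cast; ring⟩
  neg_mem' := by
    rintro a ⟨m, n, rfl⟩
    exact ⟨-m, -n, by push_cast; ring⟩

lemma dense_HH : Dense (HH : Set ℝ) := by
  rcases AddSubgroup.dense_or_cyclic HH with hd | ⟨a, ha⟩
  · exact hd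
  · exfalso
    have hg : gam ∈ HH := ⟨1, 0, by push_cast; ring⟩
    have h32 : (1/32 : ℝ) ∈ HH := ⟨0, 1, by push_cast; ring⟩
    rw [ha, AddSubgroup.mem_closure_singleton] at hg h32
    obtain ⟨p, hp⟩ := hg
    obtain ⟨q, hq⟩ := h32
    rw [zsmul_eq_mul] at hp hq
    have hq0 : q ≠ 0 := by rintro rfl; norm_num at hq
    have hqR : (q : ℝ) ≠ 0 := Int.cast_ne_zero.mpr hq0
    apply gam_irr
    refine ⟨(p : ℚ) / (32 * q), ?_⟩
    have h32q : (32 : ℝ) * (q:ℝ) ≠ 0 := mul_ne_zero (by norm_num) hqR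
    push_cast
    rw [div_eq_iff h32q, ← hp]
    linear_combination (-32 * (p:ℝ)) * hq

lemma exists_in_HH_Ioo {a b : ℝ} (h : a < b) : ∃ x : ℝ,
    (∃ m n : ℤ, x = m * gam + n * (1/32)) ∧ a < x ∧ x < b := by
  obtain ⟨x, hx, hx1, hx2⟩ := dense_HH.exists_between h
  exact ⟨x, hx, hx1, hx2⟩

lemma block {ℓ : ℝ} (hl0 : 0 < ℓ) (hl : ℓ ≤ 1/128) :
    ∃ ℓ', 0 < ℓ' ∧ ℓ' ≤ 2/3 * ℓ ∧ ∃ N w, 0 < N ∧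
      Steps Fam w N (Icc (1/2 - ℓ) (1/2)) (Icc (1/2 - ℓ') (1/2)) ℓ := by
  have g1 := gam_lb; have g2 := gam_ub
  obtain ⟨x, ⟨m, n, hx⟩, hx1, hx2⟩ := exists_in_HH_Ioo (by linarith : ℓ/2 < 2*ℓ/3)
  -- three D steps from 1/2
  have s1 := sD (ℓ := ℓ) (v := 1/2) (le_of_lt hl0) (by linarith)
  have s2 := sD (ℓ := ℓ) (v := 1/2 - 1/32) (le_of_lt hl0) (by linarith)
  have s3 := sD (ℓ := ℓ) (v := 1/2 - 1/32 - 1/32) (le_of_lt hl0) (by linarith)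
  -- reach from 13/32 to 7/16 + x
  obtain ⟨N4, wd4, h4⟩ := reach hl0 hl m.natAbs m (n + 1) rfl (13/32) (7/16 + x)
    (by norm_num) (by norm_num) (by linarith) (by linarith)
    (by rw [hx]; push_cast; ring)
  -- two R steps
  have s5 := sR (ℓ := ℓ) (v := 7/16 + x) (le_of_lt hl0) (by linarith)
    (by linarith)
  have s6 := sR (ℓ := ℓ) (v := 7/16 + x + 1/32) (le_of_lt hl0) (by linarith)
    (by linarith)
  -- fold
  have s7 := sFoldA (ℓ := ℓ) (v := 7/16 + x + 1/32 + 1/32) (le_of_lt hl0)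
    (by linarith) (by linarith) (by linarith) (by linarith)
  have c1 := (s1.comp s2).comp s3
  have e2 : Icc (1/2 - 1/32 - 1/32 - 1/32 - ℓ) (1/2 - 1/32 - 1/32 - 1/32) =
      Icc (13/32 - ℓ) (13/32:ℝ) := Icc_congr (by ring) (by norm_num)
  have c2 := c1.cast rfl e2
  have c3 := c2.comp h4
  have c4 := c3.comp s5
  have c5 := c4.comp s6
  have c6 := c5.comp s7
  have e6 : Icc (1 - (7/16 + x + 1/32 + 1/32)) (1/2:ℝ) = Icc (1/2 - x) (1/2) :=
    Icc_congr (by ring) rfl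
  exact ⟨x, by linarith, by linarith, _, _, by omega, c6.cast rfl e6⟩

def P (ℓ : ℝ) : Prop := 0 < ℓ ∧ ℓ ≤ 1/128

lemma blockEx : ∀ ℓ, P ℓ → ∃ q : ℝ × ℕ × (ℕ → ℝ → ℝ),
    (P q.1 ∧ q.1 ≤ 2/3 * ℓ ∧ 0 < q.2.1 ∧
      Steps Fam q.2.2 q.2.1 (Icc (1/2 - ℓ) (1/2)) (Icc (1/2 - q.1) (1/2)) ℓ) := by
  intro ℓ hℓ
  obtain ⟨ℓ', h1, h2, N, w, hN, hs⟩ := block hℓ.1 hℓ.2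
  exact ⟨(ℓ', N, w), ⟨h1, by have := hℓ.1; have := hℓ.2; linarith⟩, h2, hN, hs⟩

noncomputable def bc (ℓ : ℝ) (h : P ℓ) : ℝ × ℕ × (ℕ → ℝ → ℝ) := (blockEx ℓ h).choose

lemma bc_spec (ℓ : ℝ) (h : P ℓ) : P (bc ℓ h).1 ∧ (bc ℓ h).1 ≤ 2/3 * ℓ ∧ 0 < (bc ℓ h).2.1 ∧
    Steps Fam (bc ℓ h).2.2 (bc ℓ h).2.1 (Icc (1/2 - ℓ) (1/2)) (Icc (1/2 - (bc ℓ h).1) (1/2)) ℓ :=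
  (blockEx ℓ h).choose_spec

noncomputable def ls : ℕ → {x : ℝ // P x} :=
  Nat.rec ⟨1/128, by constructor <;> norm_num⟩
    (fun _ prev => ⟨(bc prev.1 prev.2).1, (bc_spec prev.1 prev.2).1⟩)

noncomputable def NN (k : ℕ) : ℕ := (bc (ls k).1 (ls k).2).2.1
noncomputable def WW (k : ℕ) : ℕ → ℝ → ℝ := (bc (ls k).1 (ls k).2).2.2

lemma NN_pos (k : ℕ) : 0 < NN k := (bc_spec _ _).2.2.1

lemma ls_succ_le (k : ℕ) : (ls (k+1)).1 ≤ 2/3 * (ls k).1 := (bc_spec _ _).2.1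

lemma steps_k (k : ℕ) : Steps Fam (WW k) (NN k) (Icc (1/2 - (ls k).1) (1/2))
    (Icc (1/2 - (ls (k+1)).1) (1/2)) (ls k).1 := (bc_spec _ _).2.2.2

noncomputable def SS : ℕ → ℕ := Nat.rec 0 (fun k prev => prev + NN k)

lemma SS_succ (k : ℕ) : SS (k+1) = SS k + NN k := rfl

lemma SS_ge (k : ℕ) : k ≤ SS k := by
  induction k with
  | zero => exact Nat.zero_le _
  | succ k ih => have h := NN_pos k; rw [SS_succ]; omega

lemma SS_mono : Monotone SS :=
  monotone_nat_of_le_succ (fun k => by rw [SS_succ]; omega)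

noncomputable def KK (i : ℕ) : ℕ := Nat.findGreatest (fun k => SS k ≤ i) i

lemma KK_ge (k i : ℕ) (h : SS k ≤ i) : k ≤ KK i :=
  Nat.le_findGreatest (le_trans (SS_ge k) h) h

lemma SS_zero : SS 0 = 0 := rfl

lemma SS_KK_le (i : ℕ) : SS (KK i) ≤ i := by
  have h := (Nat.findGreatest_eq_iff (P := fun k => SS k ≤ i) (k := i)
    (m := KK i)).mp rfl
  rcases Nat.eq_zero_or_pos (KK i) with h0 | h0
  · rw [h0, SS_zero]; exact Nat.zero_le i
  · exact h.2.1 (by omega)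

lemma lt_SS_KK (i : ℕ) : i < SS (KK i + 1) := by
  by_contra h
  push_neg at h
  have h1 := KK_ge (KK i + 1) i h
  omega

noncomputable def ff : ℕ → ℝ → ℝ := fun i => WW (KK i) (i - SS (KK i))

lemma KK_eq (k i : ℕ) (h1 : SS k ≤ i) (h2 : i < SS (k+1)) : KK i = k := by
  have ha := KK_ge k i h1
  by_contra hne
  have hb : k + 1 ≤ KK i := by omega
  have hc := SS_mono hb
  have hd := SS_KK_le i
  omega

lemma ff_eq (k j : ℕ) (hj : j < NN k) : ff (SS k + j) = WW k j := by
  have h1 : SS k ≤ SS k + j := by omega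
  have h2 : SS k + j < SS (k+1) := by rw [SS_succ]; omega
  unfold ff
  rw [KK_eq k _ h1 h2]
  have e3 : SS k + j - SS k = j := by omega
  rw [e3]

noncomputable def JJ : Set ℝ := Icc (1/2 - 1/128) (1/2)

lemma main1 : ∀ k j, j ≤ NN k →
    compSeq ff (SS k + j) '' JJ = compSeq (WW k) j '' Icc (1/2 - (ls k).1) (1/2) := by
  intro k
  induction k with
  | zero =>
    intro j hj
    have hSS0 : SS 0 = 0 := rfl
    have h0 : SS 0 + j = j := by omega
    rw [h0]
    have he : compSeq ff j = compSeq (WW 0) j := by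
      apply compSeq_congr
      intro i hi
      have e : i = SS 0 + i := by omega
      have h5 := ff_eq 0 i (by omega)
      rw [← e] at h5
      exact h5
    rw [he]
    rfl
  | succ k ih =>
    intro j hj
    have hend := ih (NN k) le_rfl
    have himg : compSeq ff (SS (k+1)) '' JJ = Icc (1/2 - (ls (k+1)).1) (1/2) := by
      rw [SS_succ, hend, (steps_k k).2.1]
    rw [compSeq_add ff (SS (k+1)) j, Set.image_comp, himg]
    have he : compSeq (fun i => ff (SS (k+1) + i)) j = compSeq (WW (k+1)) j := by
      apply compSeq_congr
      intro i hi
      exact ff_eq (k+1) i (by omega)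
    rw [he]

lemma ls_le (k : ℕ) : (ls k).1 ≤ (2/3)^k * (1/128) := by
  induction k with
  | zero => norm_num [ls]
  | succ k ih =>
    have h := ls_succ_le k
    calc (ls (k+1)).1 ≤ 2/3 * (ls k).1 := h
    _ ≤ 2/3 * ((2/3)^k * (1/128)) := by nlinarith [(ls k).2.1]
    _ = (2/3)^(k+1) * (1/128) := by ring

lemma vol_bound (i : ℕ) :
    volume (compSeq ff i '' JJ) ≤ ENNReal.ofReal ((2/3)^(KK i) * (1/128)) := by
  have h1 : SS (KK i) ≤ i := SS_KK_le i
  have h2 : i < SS (KK i + 1) := lt_SS_KK i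
  have hj : i - SS (KK i) ≤ NN (KK i) := by rw [SS_succ] at h2; omega
  have e : i = SS (KK i) + (i - SS (KK i)) := by omega
  calc volume (compSeq ff i '' JJ)
      = volume (compSeq (WW (KK i)) (i - SS (KK i)) '' Icc (1/2 - (ls (KK i)).1) (1/2)) := by
        rw [← main1 (KK i) _ hj, ← e]
    _ ≤ ENNReal.ofReal (ls (KK i)).1 := (steps_k (KK i)).2.2 _ hj
    _ ≤ ENNReal.ofReal ((2/3)^(KK i) * (1/128)) := ENNReal.ofReal_le_ofReal (ls_le (KK i))

lemma tendsto_vol : Filter.Tendsto (fun m => volume (compSeq ff m '' JJ))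
    Filter.atTop (nhds 0) := by
  rw [ENNReal.tendsto_atTop_zero]
  intro ε hε
  by_cases hT : ε = ⊤
  · exact ⟨0, fun n _ => hT ▸ le_top⟩
  · have htr : 0 < ε.toReal := ENNReal.toReal_pos (ne_of_gt hε) hT
    obtain ⟨k₀, hk₀⟩ := exists_pow_lt_of_lt_one htr (by norm_num : (2:ℝ)/3 < 1)
    refine ⟨SS k₀, fun n hn => ?_⟩
    have hK : k₀ ≤ KK n := KK_ge k₀ n hn
    have h2 : ((2:ℝ)/3)^(KK n) * (1/128) ≤ (2/3)^k₀ := by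
      have hp := pow_le_pow_of_le_one (by norm_num : (0:ℝ) ≤ 2/3) (by norm_num) hK
      nlinarith [pow_nonneg (by norm_num : (0:ℝ) ≤ 2/3) (KK n)]
    calc volume (compSeq ff n '' JJ) ≤ _ := vol_bound n
    _ ≤ ENNReal.ofReal ((2/3)^k₀) := ENNReal.ofReal_le_ofReal h2
    _ ≤ ENNReal.ofReal ε.toReal := ENNReal.ofReal_le_ofReal (le_of_lt hk₀)
    _ = ε := ENNReal.ofReal_toReal hT

lemma ff_fam (i : ℕ) : Fam (ff i) := by
  have h2 : i < SS (KK i + 1) := lt_SS_KK i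
  rw [SS_succ] at h2
  exact (steps_k (KK i)).1 _ (by have := SS_KK_le i; omega)

noncomputable def aB : ℕ → ℝ := fun i =>
  if i = 0 then 0 else if i = 1 then 1/2 + gam/2 else if i = 2 then (2 + gam)/3 else 1

lemma plncB : PiecewiseLinearNonContracting mapB := by
  have g1 := gam_lb; have g2 := gam_ub
  refine ⟨3, aB, by norm_num, by norm_num [aB], by norm_num [aB], ?_, ?_⟩
  · intro i hi
    interval_cases i <;> simp only [aB] <;> norm_num <;> linarith
  · intro i hi
    interval_cases i
    · have e : Icc (aB 0) (aB 1) = Icc (0:ℝ) (1/2 + gam/2) := by norm_num [aB]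
      rw [e]
      exact affinePiece _ _ 1 0 (by norm_num)
        (fun x hx => by rw [B_eq1 hx.2]; ring)
    · have e : Icc (aB 1) (aB 2) = Icc (1/2 + gam/2) ((2 + gam)/3) := by norm_num [aB]
      rw [e]
      exact affinePiece _ _ (-1) (1 + gam) (by norm_num)
        (fun x hx => by rw [B_eq2 hx.1 hx.2]; ring)
    · have e : Icc (aB 2) (aB 3) = Icc ((2 + gam)/3) 1 := by norm_num [aB]
      rw [e]
      exact affinePiece _ _ 2 (-1) (by norm_num)
        (fun x hx => by rw [B_eq3 hx.1]; ring)

noncomputable def aR : ℕ → ℝ := fun i => if i = 0 then 0 else if i = 1 then 31/32 else 1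

lemma plncR : PiecewiseLinearNonContracting mapR := by
  refine ⟨2, aR, by norm_num, by norm_num [aR], by norm_num [aR], ?_, ?_⟩
  · intro i hi
    interval_cases i <;> norm_num [aR]
  · intro i hi
    interval_cases i
    · have e : Icc (aR 0) (aR 1) = Icc (0:ℝ) (31/32) := by norm_num [aR]
      rw [e]
      exact affinePiece _ _ 1 (1/32) (by norm_num)
        (fun x hx => by rw [R_eq1 hx.2]; ring)
    · have e : Icc (aR 1) (aR 2) = Icc (31/32:ℝ) 1 := by norm_num [aR]
      rw [e]
      exact affinePiece _ _ (-32) 32 (by norm_num)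
        (fun x hx => by rw [R_eq2 hx.1]; ring)

noncomputable def aD : ℕ → ℝ := fun i => if i = 0 then 0 else if i = 1 then 1/32 else 1

lemma plncD : PiecewiseLinearNonContracting mapD := by
  refine ⟨2, aD, by norm_num, by norm_num [aD], by norm_num [aD], ?_, ?_⟩
  · intro i hi
    interval_cases i <;> norm_num [aD]
  · intro i hi
    interval_cases i
    · have e : Icc (aD 0) (aD 1) = Icc (0:ℝ) (1/32) := by norm_num [aD]
      rw [e]
      exact affinePiece _ _ (-32) 1 (by norm_num)
        (fun x hx => by rw [D_eq2 hx.2]; ring)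
    · have e : Icc (aD 1) (aD 2) = Icc (1/32:ℝ) 1 := by norm_num [aD]
      rw [e]
      exact affinePiece _ _ 1 (-1/32) (by norm_num)
        (fun x hx => by rw [D_eq1 hx.1]; ring)

theorem final_result : ∃ (n : ℕ) (T : Fin n → ℝ → ℝ),
    (∀ j, ContinuousOn (T j) (Icc 0 1)) ∧
    (∀ j, MapsTo (T j) (Icc 0 1) (Icc 0 1)) ∧
    (∀ j, T j '' Icc 0 1 = Icc 0 1) ∧
    (∀ j, PiecewiseLinearNonContracting (T j)) ∧
    ∃ f : ℕ → ℝ → ℝ, (∀ i, ∃ j, f i = T j) ∧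
      ∃ J : Set ℝ, J ⊆ Icc 0 1 ∧ J.OrdConnected ∧ J.Nontrivial ∧
        Filter.Tendsto (fun m => volume (compSeq f m '' J)) Filter.atTop (nhds 0) := by
  refine ⟨4, ![mapA, mapB, mapR, mapD], ?_, ?_, ?_, ?_, ff, ?_, JJ, ?_, ?_, ?_, ?_⟩
  · intro j
    fin_cases j
    · exact contA.continuousOn
    · exact contB.continuousOn
    · exact contR.continuousOn
    · exact contD.continuousOn
  · intro j
    fin_cases j
    · exact mapsA
    · exact mapsB
    · exact mapsR
    · exact mapsD
  · intro j
    fin_cases j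
    · exact surjA
    · exact surjB
    · exact surjR
    · exact surjD
  · intro j
    fin_cases j
    · exact plncA
    · exact plncB
    · exact plncR
    · exact plncD
  · intro i
    rcases ff_fam i with h | h | h | h
    · exact ⟨0, h⟩
    · exact ⟨1, h⟩
    · exact ⟨2, h⟩
    · exact ⟨3, h⟩
  · exact Icc_subset_Icc (by norm_num) (by norm_num)
  · exact Set.ordConnected_Icc
  · exact ⟨1/2 - 1/128, ⟨by norm_num, by norm_num⟩, 1/2, ⟨by norm_num, le_rfl⟩, by norm_num⟩
  · exact tendsto_vol

end NSAux

/-- There exist finitely many continuous, piecewise linear, surjective maps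
`T 1, …, T n : [0,1] → [0,1]`, each satisfying `|T_j x - T_j y| ≥ |x - y|` on intervals of
monotonicity, a nonautonomous system `(f_i)` consisting of maps from this family, and a
nondegenerate interval `J ⊆ [0,1]`, such that `lim_{m → ∞} |f_0^m(J)| = 0`. -/
theorem stmt_2 : ∃ (n : ℕ) (T : Fin n → ℝ → ℝ),
    (∀ j, ContinuousOn (T j) (Icc 0 1)) ∧
    (∀ j, MapsTo (T j) (Icc 0 1) (Icc 0 1)) ∧
    (∀ j, T j '' Icc 0 1 = Icc 0 1) ∧
    (∀ j, PiecewiseLinearNonContracting (T j)) ∧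
    ∃ f : ℕ → ℝ → ℝ, (∀ i, ∃ j, f i = T j) ∧
      ∃ J : Set ℝ, J ⊆ Icc 0 1 ∧ J.OrdConnected ∧ J.Nontrivial ∧
        Filter.Tendsto (fun m => volume (compSeq f m '' J)) Filter.atTop (nhds 0) := by
  exact NSAux.final_result
end
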